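/- arXiv:1701.02270 — 3 statements merged into one kernel-verified Lean document; each statement's English description precedes it below -/
import Mathlib

section
/- Let k ≥ 1 and write points of ℝ^{2k+2} with coordinates (x₁, …, x_k, y₁, …, y_k, t, τ); denote the corresponding standard basis vectors by e_{x_i}, e_{y_i}, e_t, e_τ, and subscripts on functions denote the corresponding partial derivatives. Let a₁, …, a_k ∈ ℝ and let u, v : ℝ^{2k+2} → ℝ be smooth functions satisfying, at every point, u_t = Σ_{i=1}^{k} (u_{x_i} v_{y_i} − u_{y_i} v_{x_i}) and v_τ = Σ_{i=1}^{k} a_i (u_{x_i} v_{y_i} − u_{y_i} v_{x_i}). For λ ∈ ℝ with λ ≠ 0, set α_i = 1/λ − a_i and β_i = 1 − λ·a_i, and define vector fields X(z) = e_τ + Σ_{i=1}^{k} α_i (u_{x_i}(z)·e_{y_i} − u_{y_i}(z)·e_{x_i}) and Y(z) = e_t + Σ_{i=1}^{k} β_i (v_{x_i}(z)·e_{y_i} − v_{y_i}(z)·e_{x_i}). Then for every λ ≠ 0 the Lie bracket [X, Y] vanishes identically on ℝ^{2k+2}. -/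
/-- The `i`-th standard basis vector of `ℝ^d` (0-based index). -/
def stdV (d i : ℕ) : Fin d → ℝ := fun j => if (j : ℕ) = i then 1 else 0

/-- Partial derivative of `f : ℝ^d → ℝ` in the `i`-th coordinate direction (0-based index). -/
noncomputable def pd (d : ℕ) (f : (Fin d → ℝ) → ℝ) (i : ℕ) (x : Fin d → ℝ) : ℝ :=
  fderiv ℝ f x (stdV d i)

section helpers
variable {d : ℕ} {f g h : (Fin d → ℝ) → ℝ} {x : Fin d → ℝ}

lemma contDiff_pd (hf : ContDiff ℝ (⊤ : ℕ∞) f) (i : ℕ) :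
    ContDiff ℝ (⊤ : ℕ∞) (pd d f i) :=
  (hf.fderiv_right (by simp)).clm_apply contDiff_const

lemma pd_pd_eq (hf : ContDiff ℝ (⊤ : ℕ∞) f) (m n : ℕ) (x : Fin d → ℝ) :
    pd d (pd d f m) n x = fderiv ℝ (fderiv ℝ f) x (stdV d n) (stdV d m) := by
  have hd2 : HasFDerivAt (fderiv ℝ f) (fderiv ℝ (fderiv ℝ f) x) x :=
    (((hf.fderiv_right (m := (⊤:ℕ∞)) (by simp)).differentiable (by simp)) x).hasFDerivAt
  have H : HasFDerivAt (fun y => fderiv ℝ f y (stdV d m))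
      ((ContinuousLinearMap.apply ℝ ℝ (stdV d m)).comp (fderiv ℝ (fderiv ℝ f) x)) x :=
    (ContinuousLinearMap.apply ℝ ℝ (stdV d m)).hasFDerivAt.comp x hd2
  show fderiv ℝ (fun y => fderiv ℝ f y (stdV d m)) x (stdV d n) = _
  rw [H.fderiv]
  rfl

lemma pd_comm (hf : ContDiff ℝ (⊤ : ℕ∞) f) (m n : ℕ) (x : Fin d → ℝ) :
    pd d (pd d f m) n x = pd d (pd d f n) m x := by
  rw [pd_pd_eq hf, pd_pd_eq hf]
  exact second_derivative_symmetric (fun y => ((hf.differentiable (by simp)) y).hasFDerivAt)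
    (((hf.fderiv_right (m := (⊤:ℕ∞)) (by simp)).differentiable (by simp)) x).hasFDerivAt _ _

lemma pd_mul (hg : DifferentiableAt ℝ g x) (hh : DifferentiableAt ℝ h x) (n : ℕ) :
    pd d (fun y => g y * h y) n x = pd d g n x * h x + g x * pd d h n x := by
  simp only [pd, fderiv_fun_mul hg hh, ContinuousLinearMap.add_apply,
    ContinuousLinearMap.smul_apply, smul_eq_mul]
  ring

lemma pd_sub (hg : DifferentiableAt ℝ g x) (hh : DifferentiableAt ℝ h x) (n : ℕ) :
    pd d (fun y => g y - h y) n x = pd d g n x - pd d h n x := by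
  simp only [pd, fderiv_fun_sub hg hh, ContinuousLinearMap.sub_apply]

lemma pd_const_mul (hg : DifferentiableAt ℝ g x) (c : ℝ) (n : ℕ) :
    pd d (fun y => c * g y) n x = c * pd d g n x := by
  simp only [pd, fderiv_const_mul hg c, ContinuousLinearMap.smul_apply, smul_eq_mul]

lemma pd_sum {κ : Type*} (s : Finset κ) (F : κ → (Fin d → ℝ) → ℝ)
    (hF : ∀ i ∈ s, DifferentiableAt ℝ (F i) x) (n : ℕ) :
    pd d (fun y => ∑ i ∈ s, F i y) n x = ∑ i ∈ s, pd d (F i) n x := by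
  simp only [pd, fderiv_fun_sum hF, ContinuousLinearMap.sum_apply]

end helpers

lemma keyScalar (k : ℕ) (a : Fin k → ℝ) (u v : (Fin (2*k+2) → ℝ) → ℝ)
    (hu : ContDiff ℝ (⊤:ℕ∞) u) (hv : ContDiff ℝ (⊤:ℕ∞) v)
    (h1 : ∀ x, pd (2*k+2) u (2*k) x = ∑ i : Fin k,
        (pd (2*k+2) u (i:ℕ) x * pd (2*k+2) v (k+(i:ℕ)) x
          - pd (2*k+2) u (k+(i:ℕ)) x * pd (2*k+2) v (i:ℕ) x))
    (h2 : ∀ x, pd (2*k+2) v (2*k+1) x = ∑ i : Fin k,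
        a i * (pd (2*k+2) u (i:ℕ) x * pd (2*k+2) v (k+(i:ℕ)) x
          - pd (2*k+2) u (k+(i:ℕ)) x * pd (2*k+2) v (i:ℕ) x))
    (lam : ℝ) (hlam : lam ≠ 0) (x : Fin (2*k+2) → ℝ) (i : Fin k) (m : ℕ) :
    (1 - lam * a i) * (pd (2*k+2) (pd (2*k+2) v m) (2*k+1) x
        + ∑ j : Fin k, (1/lam - a j) * (pd (2*k+2) u (j:ℕ) x * pd (2*k+2) (pd (2*k+2) v m) (k+(j:ℕ)) x
            - pd (2*k+2) u (k+(j:ℕ)) x * pd (2*k+2) (pd (2*k+2) v m) (j:ℕ) x))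
    = (1/lam - a i) * (pd (2*k+2) (pd (2*k+2) u m) (2*k) x
        + ∑ j : Fin k, (1 - lam * a j) * (pd (2*k+2) v (j:ℕ) x * pd (2*k+2) (pd (2*k+2) u m) (k+(j:ℕ)) x
            - pd (2*k+2) v (k+(j:ℕ)) x * pd (2*k+2) (pd (2*k+2) u m) (j:ℕ) x)) := by
  have hdu : ∀ (n : ℕ) (y : Fin (2*k+2) → ℝ), DifferentiableAt ℝ (pd (2*k+2) u n) y :=
    fun n y => ((contDiff_pd hu n).differentiable (by simp)) y
  have hdv : ∀ (n : ℕ) (y : Fin (2*k+2) → ℝ), DifferentiableAt ℝ (pd (2*k+2) v n) y :=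
    fun n y => ((contDiff_pd hv n).differentiable (by simp)) y
  have e1 : pd (2*k+2) (pd (2*k+2) u (2*k)) m x
      = ∑ j : Fin k, (pd (2*k+2) (pd (2*k+2) u (j:ℕ)) m x * pd (2*k+2) v (k+(j:ℕ)) x
          + pd (2*k+2) u (j:ℕ) x * pd (2*k+2) (pd (2*k+2) v (k+(j:ℕ))) m x
          - (pd (2*k+2) (pd (2*k+2) u (k+(j:ℕ))) m x * pd (2*k+2) v (j:ℕ) x
            + pd (2*k+2) u (k+(j:ℕ)) x * pd (2*k+2) (pd (2*k+2) v (j:ℕ)) m x)) := by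
    rw [show pd (2*k+2) u (2*k) = fun y => ∑ j : Fin k,
        (pd (2*k+2) u (j:ℕ) y * pd (2*k+2) v (k+(j:ℕ)) y
          - pd (2*k+2) u (k+(j:ℕ)) y * pd (2*k+2) v (j:ℕ) y) from funext h1,
      pd_sum Finset.univ (fun (j : Fin k) y => pd (2*k+2) u (j:ℕ) y * pd (2*k+2) v (k+(j:ℕ)) y
          - pd (2*k+2) u (k+(j:ℕ)) y * pd (2*k+2) v (j:ℕ) y)
        (fun j _ => ((hdu j x).mul (hdv (k+(j:ℕ)) x)).sub (((hdu (k+(j:ℕ)) x)).mul (hdv j x))) m]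
    refine Finset.sum_congr rfl fun j _ => ?_
    rw [pd_sub ((hdu j x).fun_mul (hdv (k+(j:ℕ)) x)) ((hdu (k+(j:ℕ)) x).fun_mul (hdv j x)),
      pd_mul (hdu j x) (hdv (k+(j:ℕ)) x), pd_mul (hdu (k+(j:ℕ)) x) (hdv j x)]
  have e2 : pd (2*k+2) (pd (2*k+2) v (2*k+1)) m x
      = ∑ j : Fin k, a j * (pd (2*k+2) (pd (2*k+2) u (j:ℕ)) m x * pd (2*k+2) v (k+(j:ℕ)) x
          + pd (2*k+2) u (j:ℕ) x * pd (2*k+2) (pd (2*k+2) v (k+(j:ℕ))) m x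
          - (pd (2*k+2) (pd (2*k+2) u (k+(j:ℕ))) m x * pd (2*k+2) v (j:ℕ) x
            + pd (2*k+2) u (k+(j:ℕ)) x * pd (2*k+2) (pd (2*k+2) v (j:ℕ)) m x)) := by
    rw [show pd (2*k+2) v (2*k+1) = fun y => ∑ j : Fin k,
        a j * (pd (2*k+2) u (j:ℕ) y * pd (2*k+2) v (k+(j:ℕ)) y
          - pd (2*k+2) u (k+(j:ℕ)) y * pd (2*k+2) v (j:ℕ) y) from funext h2,
      pd_sum Finset.univ (fun (j : Fin k) y => a j * (pd (2*k+2) u (j:ℕ) y * pd (2*k+2) v (k+(j:ℕ)) y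
          - pd (2*k+2) u (k+(j:ℕ)) y * pd (2*k+2) v (j:ℕ) y))
        (fun j _ => ((((hdu j x).mul (hdv (k+(j:ℕ)) x)).sub
          (((hdu (k+(j:ℕ)) x)).mul (hdv j x))).const_mul (a j))) m]
    refine Finset.sum_congr rfl fun j _ => ?_
    rw [pd_const_mul (((hdu j x).fun_mul (hdv (k+(j:ℕ)) x)).fun_sub ((hdu (k+(j:ℕ)) x).fun_mul (hdv j x))) (a j),
      pd_sub ((hdu j x).fun_mul (hdv (k+(j:ℕ)) x)) ((hdu (k+(j:ℕ)) x).fun_mul (hdv j x)),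
      pd_mul (hdu j x) (hdv (k+(j:ℕ)) x), pd_mul (hdu (k+(j:ℕ)) x) (hdv j x)]
  simp only [pd_comm hv m, pd_comm hu m]
  rw [e1, e2, ← Finset.sum_add_distrib, ← Finset.sum_add_distrib, Finset.mul_sum, Finset.mul_sum]
  refine Finset.sum_congr rfl fun j _ => ?_
  have hsub : ∀ c : ℝ, 1/lam - c = (1 - lam * c)/lam := fun c => by field_simp
  simp only [hsub]
  field_simp
  ring_nf

/-- Lie bracket of vector fields: `[X,Y](x) = DY(x)(X(x)) - DX(x)(Y(x))`. -/
noncomputable def lieB (d : ℕ) (X Y : (Fin d → ℝ) → (Fin d → ℝ)) (x : Fin d → ℝ) :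
    Fin d → ℝ :=
  fderiv ℝ Y x (X x) - fderiv ℝ X x (Y x)

lemma pd_def {d : ℕ} (f : (Fin d → ℝ) → ℝ) (n : ℕ) (x : Fin d → ℝ) :
    fderiv ℝ f x (stdV d n) = pd d f n x := rfl

lemma eval_sum {d kk : ℕ} (c : Fin kk → ℝ) (A B : Fin kk → ((Fin d → ℝ) →L[ℝ] ℝ))
    (E F : Fin kk → (Fin d → ℝ)) (w : Fin d → ℝ) :
    (∑ i : Fin kk, c i • ((A i).smulRight (E i) - (B i).smulRight (F i))) w
      = ∑ i : Fin kk, c i • ((A i w) • E i - (B i w) • F i) := by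
  simp [ContinuousLinearMap.sum_apply, ContinuousLinearMap.smul_apply,
    ContinuousLinearMap.sub_apply, ContinuousLinearMap.smulRight_apply]

lemma clm_apply_vec {d kk : ℕ} (L : (Fin d → ℝ) →L[ℝ] ℝ) (t : ℕ) (α p q : Fin kk → ℝ)
    (σ ρ : Fin kk → ℕ) :
    L (stdV d t + ∑ j : Fin kk, α j • (p j • stdV d (σ j) - q j • stdV d (ρ j)))
      = L (stdV d t) + ∑ j : Fin kk, α j * (p j * L (stdV d (σ j)) - q j * L (stdV d (ρ j))) := by
  rw [map_add, map_sum]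
  congr 1
  refine Finset.sum_congr rfl fun j _ => ?_
  rw [map_smul, map_sub, map_smul, map_smul]
  simp [smul_eq_mul]

/- Coordinates of `ℝ^(2k+2)` are ordered as `(x₁, …, x_k, y₁, …, y_k, t, τ)`:
for `i : Fin k`, the coordinate `x_i` has (0-based) index `i`, the coordinate `y_i`
has index `k + i`, `t` has index `2k` and `τ` has index `2k + 1`. -/
theorem stmt13 (k : ℕ) (hk : 1 ≤ k) (a : Fin k → ℝ)
    (u v : (Fin (2 * k + 2) → ℝ) → ℝ)
    (hu : ContDiff ℝ (⊤ : ℕ∞) u) (hv : ContDiff ℝ (⊤ : ℕ∞) v)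
    (h1 : ∀ x, pd (2 * k + 2) u (2 * k) x
        = ∑ i : Fin k, (pd (2 * k + 2) u (i : ℕ) x * pd (2 * k + 2) v (k + (i : ℕ)) x
            - pd (2 * k + 2) u (k + (i : ℕ)) x * pd (2 * k + 2) v (i : ℕ) x))
    (h2 : ∀ x, pd (2 * k + 2) v (2 * k + 1) x
        = ∑ i : Fin k, a i * (pd (2 * k + 2) u (i : ℕ) x * pd (2 * k + 2) v (k + (i : ℕ)) x
            - pd (2 * k + 2) u (k + (i : ℕ)) x * pd (2 * k + 2) v (i : ℕ) x)) :
    ∀ lam : ℝ, lam ≠ 0 → ∀ x : Fin (2 * k + 2) → ℝ,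
      lieB (2 * k + 2)
        (fun z => stdV (2 * k + 2) (2 * k + 1)
          + ∑ i : Fin k, (1 / lam - a i) •
              (pd (2 * k + 2) u (i : ℕ) z • stdV (2 * k + 2) (k + (i : ℕ))
                - pd (2 * k + 2) u (k + (i : ℕ)) z • stdV (2 * k + 2) (i : ℕ)))
        (fun z => stdV (2 * k + 2) (2 * k)
          + ∑ i : Fin k, (1 - lam * a i) •
              (pd (2 * k + 2) v (i : ℕ) z • stdV (2 * k + 2) (k + (i : ℕ))
                - pd (2 * k + 2) v (k + (i : ℕ)) z • stdV (2 * k + 2) (i : ℕ)))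
        x = 0 := by
  intro lam hlam x
  have hdu : ∀ (n : ℕ) (y : Fin (2*k+2) → ℝ), DifferentiableAt ℝ (pd (2*k+2) u n) y :=
    fun n y => ((contDiff_pd hu n).differentiable (by simp)) y
  have hdv : ∀ (n : ℕ) (y : Fin (2*k+2) → ℝ), DifferentiableAt ℝ (pd (2*k+2) v n) y :=
    fun n y => ((contDiff_pd hv n).differentiable (by simp)) y
  have hXt : ∀ i : Fin k, HasFDerivAt
      (fun z => (1 / lam - a i) •
          (pd (2 * k + 2) u (i : ℕ) z • stdV (2 * k + 2) (k + (i : ℕ))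
            - pd (2 * k + 2) u (k + (i : ℕ)) z • stdV (2 * k + 2) (i : ℕ)))
      ((1 / lam - a i) •
          ((fderiv ℝ (pd (2 * k + 2) u (i : ℕ)) x).smulRight (stdV (2 * k + 2) (k + (i : ℕ)))
            - (fderiv ℝ (pd (2 * k + 2) u (k + (i : ℕ))) x).smulRight (stdV (2 * k + 2) (i : ℕ)))) x :=
    fun i => (((hdu i x).hasFDerivAt.smul_const _).fun_sub
      ((hdu (k + (i : ℕ)) x).hasFDerivAt.smul_const _)).fun_const_smul _
  have hYt : ∀ i : Fin k, HasFDerivAt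
      (fun z => (1 - lam * a i) •
          (pd (2 * k + 2) v (i : ℕ) z • stdV (2 * k + 2) (k + (i : ℕ))
            - pd (2 * k + 2) v (k + (i : ℕ)) z • stdV (2 * k + 2) (i : ℕ)))
      ((1 - lam * a i) •
          ((fderiv ℝ (pd (2 * k + 2) v (i : ℕ)) x).smulRight (stdV (2 * k + 2) (k + (i : ℕ)))
            - (fderiv ℝ (pd (2 * k + 2) v (k + (i : ℕ))) x).smulRight (stdV (2 * k + 2) (i : ℕ)))) x :=
    fun i => (((hdv i x).hasFDerivAt.smul_const _).fun_sub
      ((hdv (k + (i : ℕ)) x).hasFDerivAt.smul_const _)).fun_const_smul _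
  have hX := (HasFDerivAt.fun_sum (fun i (_ : i ∈ Finset.univ) => hXt i)).const_add
      (stdV (2 * k + 2) (2 * k + 1))
  have hY := (HasFDerivAt.fun_sum (fun i (_ : i ∈ Finset.univ) => hYt i)).const_add
      (stdV (2 * k + 2) (2 * k))
  rw [lieB, hX.fderiv, hY.fderiv, sub_eq_zero, eval_sum, eval_sum]
  refine Finset.sum_congr rfl fun i _ => ?_
  rw [clm_apply_vec, clm_apply_vec, clm_apply_vec, clm_apply_vec]
  simp only [pd_def]
  rw [smul_sub, smul_sub, smul_smul, smul_smul, smul_smul, smul_smul,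
    keyScalar k a u v hu hv h1 h2 lam hlam x i (i : ℕ),
    keyScalar k a u v hu hv h1 h2 lam hlam x i (k + (i : ℕ))]
end

section
/- Let k ≥ 1 and d = 2k+1, with standard basis (e₁, …, e_d) of ℝ^d; subscripts on functions denote partial derivatives in the corresponding coordinate. Let u, v : ℝ^d → ℝ be smooth functions satisfying, at every point, u₁ + v₂ = Σ_{s=2}^{k} (u_{2s−1} v_{2s} − u_{2s} v_{2s−1}) and u₂ + v₃ = Σ_{s=2}^{k} (u_{2s} v_{2s+1} − u_{2s+1} v_{2s}). For λ ∈ ℝ set α_i = 1 for odd i and α_i = λ for even i (3 ≤ i ≤ 2k), and define vector fields X(z) = e₂ + λ·e₃ − Σ_{i=3}^{2k} α_i (u_i(z)·e_{i+1} − u_{i+1}(z)·e_i) and Y(z) = e₁ + λ·e₂ + Σ_{i=3}^{2k} α_i (v_i(z)·e_{i+1} − v_{i+1}(z)·e_i). Then for every λ ∈ ℝ the Lie bracket [X, Y] vanishes identically on ℝ^d. -/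
lemma pd_contDiff {d : ℕ} {f : (Fin d → ℝ) → ℝ} (hf : ContDiff ℝ (⊤ : ℕ∞) f) (i : ℕ) :
    ContDiff ℝ (⊤ : ℕ∞) (pd d f i) :=
  (hf.fderiv_right (m := (⊤ : ℕ∞)) (by exact_mod_cast le_top)).clm_apply contDiff_const

lemma pd_hasFDerivAt {d : ℕ} {f : (Fin d → ℝ) → ℝ} (hf : ContDiff ℝ (⊤ : ℕ∞) f) (i : ℕ)
    (x : Fin d → ℝ) : HasFDerivAt (pd d f i) (fderiv ℝ (pd d f i) x) x :=
  (((pd_contDiff hf i).differentiable (by norm_cast)) x).hasFDerivAt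

lemma pd_fderiv_eq {d : ℕ} {f : (Fin d → ℝ) → ℝ} (hf : ContDiff ℝ (⊤ : ℕ∞) f) (a : ℕ)
    (x : Fin d → ℝ) :
    fderiv ℝ (pd d f a) x
      = (ContinuousLinearMap.apply ℝ ℝ (stdV d a)).comp (fderiv ℝ (fderiv ℝ f) x) := by
  have hd : DifferentiableAt ℝ (fderiv ℝ f) x :=
    ((hf.fderiv_right (m := (⊤ : ℕ∞)) (by exact_mod_cast le_top)).differentiable
      (by norm_cast)) x
  exact (((ContinuousLinearMap.apply ℝ ℝ (stdV d a)).hasFDerivAt).comp x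
    hd.hasFDerivAt).fderiv

lemma pd_symm {d : ℕ} {f : (Fin d → ℝ) → ℝ} (hf : ContDiff ℝ (⊤ : ℕ∞) f) (a b : ℕ)
    (x : Fin d → ℝ) :
    fderiv ℝ (pd d f a) x (stdV d b) = fderiv ℝ (pd d f b) x (stdV d a) := by
  have hs : IsSymmSndFDerivAt ℝ f x :=
    hf.contDiffAt.isSymmSndFDerivAt
      (by rw [minSmoothness_of_isRCLikeNormedField]; exact WithTop.coe_le_coe.mpr le_top)
  rw [pd_fderiv_eq hf, pd_fderiv_eq hf]
  simpa using hs (stdV d b) (stdV d a)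

lemma sum_split {M : Type*} [AddCommMonoid M] (f : ℕ → M) (k : ℕ) :
    ∑ i ∈ Finset.Icc 3 (2 * k), f i
      = ∑ s ∈ Finset.Icc 2 k, (f (2 * s - 1) + f (2 * s)) := by
  induction k with
  | zero => simp
  | succ k ih =>
    rcases Nat.eq_zero_or_pos k with rfl | hk
    · norm_num
    · have e1 : 2 * (k + 1) = (2 * k + 1) + 1 := by ring
      rw [e1, Finset.sum_Icc_succ_top (by omega), Finset.sum_Icc_succ_top (by omega),
        Finset.sum_Icc_succ_top (by omega), ih]
      have e2 : 2 * (k + 1) - 1 = 2 * k + 1 := by omega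
      have e3 : 2 * (k + 1) = 2 * k + 1 + 1 := by omega
      rw [e2, ← e3]
      abel

/-- The vector-field sum part has the expected derivative. -/
lemma field_hasFDerivAt {d : ℕ} {f : (Fin d → ℝ) → ℝ} (hf : ContDiff ℝ (⊤ : ℕ∞) f)
    (t : ℕ → ℝ) (s : Finset ℕ) (x : Fin d → ℝ) :
    HasFDerivAt
      (fun z => ∑ i ∈ s, t i • (pd d f (i - 1) z • stdV d i - pd d f i z • stdV d (i - 1)))
      (∑ i ∈ s, t i • ((fderiv ℝ (pd d f (i - 1)) x).smulRight (stdV d i)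
        - (fderiv ℝ (pd d f i) x).smulRight (stdV d (i - 1)))) x := by
  refine HasFDerivAt.fun_sum fun i _ => ?_
  exact (((pd_hasFDerivAt hf (i - 1) x).smul_const (stdV d i)).sub
    ((pd_hasFDerivAt hf i x).smul_const (stdV d (i - 1)))).const_smul (t i)

set_option maxHeartbeats 1000000 in
/- Here the paper's 1-based coordinate subscript `i` corresponds to the 0-based
index `i - 1`; e.g. `u_i = pd d u (i-1)` and `e_i = stdV d (i-1)`. -/
theorem stmt14 (k : ℕ) (hk : 1 ≤ k)
    (u v : (Fin (2 * k + 1) → ℝ) → ℝ)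
    (hu : ContDiff ℝ (⊤ : ℕ∞) u) (hv : ContDiff ℝ (⊤ : ℕ∞) v)
    (h1 : ∀ x, pd (2 * k + 1) u 0 x + pd (2 * k + 1) v 1 x
        = ∑ s ∈ Finset.Icc 2 k,
            (pd (2 * k + 1) u (2 * s - 2) x * pd (2 * k + 1) v (2 * s - 1) x
              - pd (2 * k + 1) u (2 * s - 1) x * pd (2 * k + 1) v (2 * s - 2) x))
    (h2 : ∀ x, pd (2 * k + 1) u 1 x + pd (2 * k + 1) v 2 x
        = ∑ s ∈ Finset.Icc 2 k,
            (pd (2 * k + 1) u (2 * s - 1) x * pd (2 * k + 1) v (2 * s) x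
              - pd (2 * k + 1) u (2 * s) x * pd (2 * k + 1) v (2 * s - 1) x)) :
    ∀ lam : ℝ, ∀ x : Fin (2 * k + 1) → ℝ,
      lieB (2 * k + 1)
        (fun z => stdV (2 * k + 1) 1 + lam • stdV (2 * k + 1) 2
          - ∑ i ∈ Finset.Icc 3 (2 * k), (if i % 2 = 1 then (1 : ℝ) else lam) •
              (pd (2 * k + 1) u (i - 1) z • stdV (2 * k + 1) i
                - pd (2 * k + 1) u i z • stdV (2 * k + 1) (i - 1)))
        (fun z => stdV (2 * k + 1) 0 + lam • stdV (2 * k + 1) 1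
          + ∑ i ∈ Finset.Icc 3 (2 * k), (if i % 2 = 1 then (1 : ℝ) else lam) •
              (pd (2 * k + 1) v (i - 1) z • stdV (2 * k + 1) i
                - pd (2 * k + 1) v i z • stdV (2 * k + 1) (i - 1)))
        x = 0 := by
  intro lam x
  have key : ∀ m : ℕ,
      fderiv ℝ (pd (2 * k + 1) v m) x
          (stdV (2 * k + 1) 1 + lam • stdV (2 * k + 1) 2
            - ∑ i ∈ Finset.Icc 3 (2 * k), (if i % 2 = 1 then (1 : ℝ) else lam) •
                (pd (2 * k + 1) u (i - 1) x • stdV (2 * k + 1) i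
                  - pd (2 * k + 1) u i x • stdV (2 * k + 1) (i - 1)))
        + fderiv ℝ (pd (2 * k + 1) u m) x
          (stdV (2 * k + 1) 0 + lam • stdV (2 * k + 1) 1
            + ∑ i ∈ Finset.Icc 3 (2 * k), (if i % 2 = 1 then (1 : ℝ) else lam) •
                (pd (2 * k + 1) v (i - 1) x • stdV (2 * k + 1) i
                  - pd (2 * k + 1) v i x • stdV (2 * k + 1) (i - 1))) = 0 := by
    intro m
    have eA : ∀ j, fderiv ℝ (pd (2 * k + 1) u m) x (stdV (2 * k + 1) j)
        = fderiv ℝ (pd (2 * k + 1) u j) x (stdV (2 * k + 1) m) := fun j => pd_symm hu m j x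
    have eB : ∀ j, fderiv ℝ (pd (2 * k + 1) v m) x (stdV (2 * k + 1) j)
        = fderiv ℝ (pd (2 * k + 1) v j) x (stdV (2 * k + 1) m) := fun j => pd_symm hv m j x
    simp only [map_add, map_sub, map_smul, map_sum, smul_eq_mul, eA, eB]
    -- differentiated first hypothesis
    have hFG1 : (fun y => pd (2 * k + 1) u 0 y + pd (2 * k + 1) v 1 y)
        = (fun y => ∑ s ∈ Finset.Icc 2 k,
            (pd (2 * k + 1) u (2 * s - 2) y * pd (2 * k + 1) v (2 * s - 1) y
              - pd (2 * k + 1) u (2 * s - 1) y * pd (2 * k + 1) v (2 * s - 2) y)) := funext h1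
    have hF1 : HasFDerivAt (fun y => pd (2 * k + 1) u 0 y + pd (2 * k + 1) v 1 y)
        (fderiv ℝ (pd (2 * k + 1) u 0) x + fderiv ℝ (pd (2 * k + 1) v 1) x) x :=
      (pd_hasFDerivAt hu 0 x).add (pd_hasFDerivAt hv 1 x)
    have hG1 : HasFDerivAt (fun y => ∑ s ∈ Finset.Icc 2 k,
          (pd (2 * k + 1) u (2 * s - 2) y * pd (2 * k + 1) v (2 * s - 1) y
            - pd (2 * k + 1) u (2 * s - 1) y * pd (2 * k + 1) v (2 * s - 2) y))
        (∑ s ∈ Finset.Icc 2 k,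
          ((pd (2 * k + 1) u (2 * s - 2) x • fderiv ℝ (pd (2 * k + 1) v (2 * s - 1)) x
              + pd (2 * k + 1) v (2 * s - 1) x • fderiv ℝ (pd (2 * k + 1) u (2 * s - 2)) x)
            - (pd (2 * k + 1) u (2 * s - 1) x • fderiv ℝ (pd (2 * k + 1) v (2 * s - 2)) x
              + pd (2 * k + 1) v (2 * s - 2) x • fderiv ℝ (pd (2 * k + 1) u (2 * s - 1)) x))) x :=
      HasFDerivAt.fun_sum fun s _ =>
        ((pd_hasFDerivAt hu _ x).mul (pd_hasFDerivAt hv _ x)).sub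
          ((pd_hasFDerivAt hu _ x).mul (pd_hasFDerivAt hv _ x))
    have hH1c : fderiv ℝ (pd (2 * k + 1) u 0) x + fderiv ℝ (pd (2 * k + 1) v 1) x
        = ∑ s ∈ Finset.Icc 2 k,
          ((pd (2 * k + 1) u (2 * s - 2) x • fderiv ℝ (pd (2 * k + 1) v (2 * s - 1)) x
              + pd (2 * k + 1) v (2 * s - 1) x • fderiv ℝ (pd (2 * k + 1) u (2 * s - 2)) x)
            - (pd (2 * k + 1) u (2 * s - 1) x • fderiv ℝ (pd (2 * k + 1) v (2 * s - 2)) x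
              + pd (2 * k + 1) v (2 * s - 2) x • fderiv ℝ (pd (2 * k + 1) u (2 * s - 1)) x)) := by
      rw [← hF1.fderiv, ← hG1.fderiv, hFG1]
    have hH1 := congrArg (fun L : (Fin (2 * k + 1) → ℝ) →L[ℝ] ℝ => L (stdV (2 * k + 1) m)) hH1c
    simp only [ContinuousLinearMap.add_apply, ContinuousLinearMap.sum_apply,
      ContinuousLinearMap.smul_apply, ContinuousLinearMap.sub_apply, smul_eq_mul] at hH1
    -- differentiated second hypothesis
    have hFG2 : (fun y => pd (2 * k + 1) u 1 y + pd (2 * k + 1) v 2 y)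
        = (fun y => ∑ s ∈ Finset.Icc 2 k,
            (pd (2 * k + 1) u (2 * s - 1) y * pd (2 * k + 1) v (2 * s) y
              - pd (2 * k + 1) u (2 * s) y * pd (2 * k + 1) v (2 * s - 1) y)) := funext h2
    have hF2 : HasFDerivAt (fun y => pd (2 * k + 1) u 1 y + pd (2 * k + 1) v 2 y)
        (fderiv ℝ (pd (2 * k + 1) u 1) x + fderiv ℝ (pd (2 * k + 1) v 2) x) x :=
      (pd_hasFDerivAt hu 1 x).add (pd_hasFDerivAt hv 2 x)
    have hG2 : HasFDerivAt (fun y => ∑ s ∈ Finset.Icc 2 k,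
          (pd (2 * k + 1) u (2 * s - 1) y * pd (2 * k + 1) v (2 * s) y
            - pd (2 * k + 1) u (2 * s) y * pd (2 * k + 1) v (2 * s - 1) y))
        (∑ s ∈ Finset.Icc 2 k,
          ((pd (2 * k + 1) u (2 * s - 1) x • fderiv ℝ (pd (2 * k + 1) v (2 * s)) x
              + pd (2 * k + 1) v (2 * s) x • fderiv ℝ (pd (2 * k + 1) u (2 * s - 1)) x)
            - (pd (2 * k + 1) u (2 * s) x • fderiv ℝ (pd (2 * k + 1) v (2 * s - 1)) x
              + pd (2 * k + 1) v (2 * s - 1) x • fderiv ℝ (pd (2 * k + 1) u (2 * s)) x))) x :=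
      HasFDerivAt.fun_sum fun s _ =>
        ((pd_hasFDerivAt hu _ x).mul (pd_hasFDerivAt hv _ x)).sub
          ((pd_hasFDerivAt hu _ x).mul (pd_hasFDerivAt hv _ x))
    have hH2c : fderiv ℝ (pd (2 * k + 1) u 1) x + fderiv ℝ (pd (2 * k + 1) v 2) x
        = ∑ s ∈ Finset.Icc 2 k,
          ((pd (2 * k + 1) u (2 * s - 1) x • fderiv ℝ (pd (2 * k + 1) v (2 * s)) x
              + pd (2 * k + 1) v (2 * s) x • fderiv ℝ (pd (2 * k + 1) u (2 * s - 1)) x)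
            - (pd (2 * k + 1) u (2 * s) x • fderiv ℝ (pd (2 * k + 1) v (2 * s - 1)) x
              + pd (2 * k + 1) v (2 * s - 1) x • fderiv ℝ (pd (2 * k + 1) u (2 * s)) x)) := by
      rw [← hF2.fderiv, ← hG2.fderiv, hFG2]
    have hH2 := congrArg (fun L : (Fin (2 * k + 1) → ℝ) →L[ℝ] ℝ => L (stdV (2 * k + 1) m)) hH2c
    simp only [ContinuousLinearMap.add_apply, ContinuousLinearMap.sum_apply,
      ContinuousLinearMap.smul_apply, ContinuousLinearMap.sub_apply, smul_eq_mul] at hH2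
    -- reindexing of the two sums over `Icc 3 (2*k)`
    have hkey3 :
        (∑ i ∈ Finset.Icc 3 (2 * k), (if i % 2 = 1 then (1 : ℝ) else lam) *
            (pd (2 * k + 1) u (i - 1) x * fderiv ℝ (pd (2 * k + 1) v i) x (stdV (2 * k + 1) m)
              - pd (2 * k + 1) u i x * fderiv ℝ (pd (2 * k + 1) v (i - 1)) x (stdV (2 * k + 1) m)))
          - ∑ i ∈ Finset.Icc 3 (2 * k), (if i % 2 = 1 then (1 : ℝ) else lam) *
            (pd (2 * k + 1) v (i - 1) x * fderiv ℝ (pd (2 * k + 1) u i) x (stdV (2 * k + 1) m)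
              - pd (2 * k + 1) v i x * fderiv ℝ (pd (2 * k + 1) u (i - 1)) x (stdV (2 * k + 1) m))
        = (∑ s ∈ Finset.Icc 2 k,
            (pd (2 * k + 1) u (2 * s - 2) x * fderiv ℝ (pd (2 * k + 1) v (2 * s - 1)) x (stdV (2 * k + 1) m)
              + pd (2 * k + 1) v (2 * s - 1) x * fderiv ℝ (pd (2 * k + 1) u (2 * s - 2)) x (stdV (2 * k + 1) m)
              - (pd (2 * k + 1) u (2 * s - 1) x * fderiv ℝ (pd (2 * k + 1) v (2 * s - 2)) x (stdV (2 * k + 1) m)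
                + pd (2 * k + 1) v (2 * s - 2) x * fderiv ℝ (pd (2 * k + 1) u (2 * s - 1)) x (stdV (2 * k + 1) m))))
          + lam * ∑ s ∈ Finset.Icc 2 k,
            (pd (2 * k + 1) u (2 * s - 1) x * fderiv ℝ (pd (2 * k + 1) v (2 * s)) x (stdV (2 * k + 1) m)
              + pd (2 * k + 1) v (2 * s) x * fderiv ℝ (pd (2 * k + 1) u (2 * s - 1)) x (stdV (2 * k + 1) m)
              - (pd (2 * k + 1) u (2 * s) x * fderiv ℝ (pd (2 * k + 1) v (2 * s - 1)) x (stdV (2 * k + 1) m)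
                + pd (2 * k + 1) v (2 * s - 1) x * fderiv ℝ (pd (2 * k + 1) u (2 * s)) x (stdV (2 * k + 1) m))) := by
      rw [← Finset.sum_sub_distrib, sum_split, Finset.mul_sum, ← Finset.sum_add_distrib]
      refine Finset.sum_congr rfl fun s hs => ?_
      have hs2 : 2 ≤ s := (Finset.mem_Icc.mp hs).1
      rw [if_pos (show (2 * s - 1) % 2 = 1 by omega),
        if_neg (show ¬ (2 * s) % 2 = 1 by omega),
        show 2 * s - 1 - 1 = 2 * s - 2 by omega]
      ring
    linear_combination hH1 + lam * hH2 - hkey3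
  have hXd : HasFDerivAt
      (fun z => stdV (2 * k + 1) 1 + lam • stdV (2 * k + 1) 2
        - ∑ i ∈ Finset.Icc 3 (2 * k), (if i % 2 = 1 then (1 : ℝ) else lam) •
            (pd (2 * k + 1) u (i - 1) z • stdV (2 * k + 1) i
              - pd (2 * k + 1) u i z • stdV (2 * k + 1) (i - 1)))
      (-(∑ i ∈ Finset.Icc 3 (2 * k), (if i % 2 = 1 then (1 : ℝ) else lam) •
          ((fderiv ℝ (pd (2 * k + 1) u (i - 1)) x).smulRight (stdV (2 * k + 1) i)
            - (fderiv ℝ (pd (2 * k + 1) u i) x).smulRight (stdV (2 * k + 1) (i - 1))))) x :=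
    (field_hasFDerivAt hu (fun i => if i % 2 = 1 then (1 : ℝ) else lam)
      (Finset.Icc 3 (2 * k)) x).const_sub (stdV (2 * k + 1) 1 + lam • stdV (2 * k + 1) 2)
  have hYd : HasFDerivAt
      (fun z => stdV (2 * k + 1) 0 + lam • stdV (2 * k + 1) 1
        + ∑ i ∈ Finset.Icc 3 (2 * k), (if i % 2 = 1 then (1 : ℝ) else lam) •
            (pd (2 * k + 1) v (i - 1) z • stdV (2 * k + 1) i
              - pd (2 * k + 1) v i z • stdV (2 * k + 1) (i - 1)))
      (∑ i ∈ Finset.Icc 3 (2 * k), (if i % 2 = 1 then (1 : ℝ) else lam) •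
          ((fderiv ℝ (pd (2 * k + 1) v (i - 1)) x).smulRight (stdV (2 * k + 1) i)
            - (fderiv ℝ (pd (2 * k + 1) v i) x).smulRight (stdV (2 * k + 1) (i - 1)))) x :=
    (field_hasFDerivAt hv (fun i => if i % 2 = 1 then (1 : ℝ) else lam)
      (Finset.Icc 3 (2 * k)) x).const_add (stdV (2 * k + 1) 0 + lam • stdV (2 * k + 1) 1)
  unfold lieB
  rw [hXd.fderiv, hYd.fderiv]
  simp only [ContinuousLinearMap.sum_apply, ContinuousLinearMap.smul_apply,
    ContinuousLinearMap.sub_apply, ContinuousLinearMap.smulRight_apply,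
    ContinuousLinearMap.neg_apply, sub_neg_eq_add]
  rw [← Finset.sum_add_distrib]
  refine Finset.sum_eq_zero fun i _ => ?_
  have k1 := key (i - 1)
  have k2 := key i
  have c1 : fderiv ℝ (pd (2 * k + 1) u (i - 1)) x
      (stdV (2 * k + 1) 0 + lam • stdV (2 * k + 1) 1
        + ∑ i ∈ Finset.Icc 3 (2 * k), (if i % 2 = 1 then (1 : ℝ) else lam) •
            (pd (2 * k + 1) v (i - 1) x • stdV (2 * k + 1) i
              - pd (2 * k + 1) v i x • stdV (2 * k + 1) (i - 1)))
      = -(fderiv ℝ (pd (2 * k + 1) v (i - 1)) x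
        (stdV (2 * k + 1) 1 + lam • stdV (2 * k + 1) 2
          - ∑ i ∈ Finset.Icc 3 (2 * k), (if i % 2 = 1 then (1 : ℝ) else lam) •
              (pd (2 * k + 1) u (i - 1) x • stdV (2 * k + 1) i
                - pd (2 * k + 1) u i x • stdV (2 * k + 1) (i - 1)))) := by
    linarith
  have c2 : fderiv ℝ (pd (2 * k + 1) u i) x
      (stdV (2 * k + 1) 0 + lam • stdV (2 * k + 1) 1
        + ∑ i ∈ Finset.Icc 3 (2 * k), (if i % 2 = 1 then (1 : ℝ) else lam) •
            (pd (2 * k + 1) v (i - 1) x • stdV (2 * k + 1) i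
              - pd (2 * k + 1) v i x • stdV (2 * k + 1) (i - 1)))
      = -(fderiv ℝ (pd (2 * k + 1) v i) x
        (stdV (2 * k + 1) 1 + lam • stdV (2 * k + 1) 2
          - ∑ i ∈ Finset.Icc 3 (2 * k), (if i % 2 = 1 then (1 : ℝ) else lam) •
              (pd (2 * k + 1) u (i - 1) x • stdV (2 * k + 1) i
                - pd (2 * k + 1) u i x • stdV (2 * k + 1) (i - 1)))) := by
    linarith
  rw [c1, c2]
  module
end

section
/- Let Ω ⊆ ℝ² be a nonempty open convex set with coordinates (u₁, v₁), and let f, g : Ω → ℝ be smooth functions satisfying the non-degeneracy condition (∂f/∂u₁ − ∂g/∂v₁)² + 4·(∂f/∂v₁)·(∂g/∂u₁) ≠ 0 at every point of Ω. Then the following are equivalent: (i) there exist two linearly independent vectors c = (c₀, c₁, c₂, c₃, c₄, c₅) ∈ ℝ⁶ such that c₀ + c₁u₁ + c₂v₁ + c₃f(u₁,v₁) + c₄g(u₁,v₁) + c₅(v₁·f(u₁,v₁) − u₁·g(u₁,v₁)) = 0 for all (u₁,v₁) ∈ Ω; (ii) there exist smooth functions p, q : Ω → ℝ such that at every point Hess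 f = p·S and Hess g = q·S, where S is the symmetric 2×2 matrix with entries S₁₁ = −2·∂g/∂u₁, S₁₂ = S₂₁ = ∂f/∂u₁ − ∂g/∂v₁, S₂₂ = 2·∂f/∂v₁. -/
/-- The `i`-th standard basis vector of `ℝ²`. -/
def bv (i : Fin 2) : Fin 2 → ℝ := Pi.single i 1

/-- Partial derivative of `f : ℝ² → ℝ` in the `i`-th coordinate direction. -/
noncomputable def pder (f : (Fin 2 → ℝ) → ℝ) (i : Fin 2) (x : Fin 2 → ℝ) : ℝ :=
  fderiv ℝ f x (bv i)

/-- The Hessian matrix of `f : ℝ² → ℝ` at `x`. -/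
noncomputable def hess (f : (Fin 2 → ℝ) → ℝ) (x : Fin 2 → ℝ) : Matrix (Fin 2) (Fin 2) ℝ :=
  Matrix.of fun i j => fderiv ℝ (fun y => fderiv ℝ f y (bv j)) x (bv i)

/-- The symmetric matrix `S` of the quadratic form `df dv₁ - dg du₁`, where the coordinates
`(u₁, v₁)` of `ℝ²` are `x 0` and `x 1`. -/
noncomputable def Smat (f g : (Fin 2 → ℝ) → ℝ) (x : Fin 2 → ℝ) : Matrix (Fin 2) (Fin 2) ℝ :=
  !![-2 * pder g 0 x, pder f 0 x - pder g 1 x;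
     pder f 0 x - pder g 1 x, 2 * pder f 1 x]

section Tools
variable {Ω : Set (Fin 2 → ℝ)} {f g : (Fin 2 → ℝ) → ℝ} {x : Fin 2 → ℝ}

lemma vec_decomp (v : Fin 2 → ℝ) : v = v 0 • bv 0 + v 1 • bv 1 := by
  funext i; fin_cases i <;> simp [bv]

lemma pder_congr (hΩ : IsOpen Ω) (h : ∀ y ∈ Ω, f y = g y) (hx : x ∈ Ω) (i : Fin 2) :
    pder f i x = pder g i x := by
  unfold pder
  rw [Filter.EventuallyEq.fderiv_eq]
  filter_upwards [hΩ.mem_nhds hx] with y hy using h y hy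

lemma pder_add (hf : DifferentiableAt ℝ f x) (hg : DifferentiableAt ℝ g x) (i : Fin 2) :
    pder (fun y => f y + g y) i x = pder f i x + pder g i x := by
  unfold pder; rw [fderiv_fun_add hf hg]; simp

lemma pder_mul (hf : DifferentiableAt ℝ f x) (hg : DifferentiableAt ℝ g x) (i : Fin 2) :
    pder (fun y => f y * g y) i x = pder f i x * g x + f x * pder g i x := by
  unfold pder; rw [fderiv_fun_mul hf hg]; simp; ring

lemma pder_const (c : ℝ) (i : Fin 2) (x : Fin 2 → ℝ) : pder (fun _ => c) i x = 0 := by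
  unfold pder; simp

lemma pder_sub (hf : DifferentiableAt ℝ f x) (hg : DifferentiableAt ℝ g x) (i : Fin 2) :
    pder (fun y => f y - g y) i x = pder f i x - pder g i x := by
  unfold pder; rw [fderiv_fun_sub hf hg]; simp

lemma pder_const_mul (hf : DifferentiableAt ℝ f x) (c : ℝ) (i : Fin 2) :
    pder (fun y => c * f y) i x = c * pder f i x := by
  unfold pder; rw [fderiv_const_mul hf]; simp

lemma coord_hasFDeriv (j : Fin 2) (x : Fin 2 → ℝ) :
    HasFDerivAt (fun y : Fin 2 → ℝ => y j)
      (ContinuousLinearMap.proj (R := ℝ) (φ := fun _ : Fin 2 => ℝ) j) x :=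
  (ContinuousLinearMap.proj (R := ℝ) (φ := fun _ : Fin 2 => ℝ) j).hasFDerivAt

lemma diff_coord (j : Fin 2) (x : Fin 2 → ℝ) :
    DifferentiableAt ℝ (fun y : Fin 2 → ℝ => y j) x :=
  (coord_hasFDeriv j x).differentiableAt

lemma pder_coord (j i : Fin 2) (x : Fin 2 → ℝ) :
    pder (fun y => y j) i x = if i = j then 1 else 0 := by
  unfold pder
  rw [(coord_hasFDeriv j x).fderiv]
  simp [bv, Pi.single_apply, eq_comm]

lemma fderiv_apply_eq (hf : DifferentiableAt ℝ f x) (v : Fin 2 → ℝ) :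
    fderiv ℝ f x v = v 0 * pder f 0 x + v 1 * pder f 1 x := by
  conv_lhs => rw [vec_decomp v]
  rw [map_add, map_smul, map_smul]
  simp [pder, smul_eq_mul]

lemma contDiffOn_pder (hΩ : IsOpen Ω) (hf : ContDiffOn ℝ (⊤ : ℕ∞) f Ω) (j : Fin 2) :
    ContDiffOn ℝ (⊤ : ℕ∞) (pder f j) Ω := by
  have h1 : ContDiffOn ℝ (⊤ : ℕ∞) (fderiv ℝ f) Ω := hf.fderiv_of_isOpen hΩ (by simp)
  exact (ContinuousLinearMap.apply ℝ ℝ (bv j)).contDiff.comp_contDiffOn h1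

lemma diffAt_of_contDiffOn (hΩ : IsOpen Ω) (hf : ContDiffOn ℝ (⊤ : ℕ∞) f Ω) (hx : x ∈ Ω) :
    DifferentiableAt ℝ f x :=
  (hf.contDiffAt (hΩ.mem_nhds hx)).differentiableAt (by decide)

lemma hess_apply (f : (Fin 2 → ℝ) → ℝ) (x : Fin 2 → ℝ) (i j : Fin 2) :
    hess f x i j = pder (pder f j) i x := rfl

lemma pder_pder_eq (hf : DifferentiableAt ℝ (fderiv ℝ f) x) (i j : Fin 2) :
    pder (pder f j) i x = fderiv ℝ (fderiv ℝ f) x (bv i) (bv j) := by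
  unfold pder
  have h : HasFDerivAt (fun y => (ContinuousLinearMap.apply ℝ ℝ (bv j)) (fderiv ℝ f y))
      ((ContinuousLinearMap.apply ℝ ℝ (bv j)).comp (fderiv ℝ (fderiv ℝ f) x)) x :=
    (ContinuousLinearMap.apply ℝ ℝ (bv j)).hasFDerivAt.comp x hf.hasFDerivAt
  rw [show (fun y => fderiv ℝ f y (bv j)) =
      fun y => (ContinuousLinearMap.apply ℝ ℝ (bv j)) (fderiv ℝ f y) from rfl, h.fderiv]
  rfl

lemma pder_comm (hΩ : IsOpen Ω) (hf : ContDiffOn ℝ (⊤ : ℕ∞) f Ω) (hx : x ∈ Ω) (i j : Fin 2) :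
    pder (pder f j) i x = pder (pder f i) j x := by
  have hca : ContDiffAt ℝ (⊤ : ℕ∞) f x := hf.contDiffAt (hΩ.mem_nhds hx)
  have hsym := hca.isSymmSndFDerivAt (n := (⊤ : ℕ∞)) (by rw [minSmoothness_of_isRCLikeNormedField]; exact WithTop.coe_le_coe.mpr le_top)
  have h1 : ContDiffOn ℝ (⊤ : ℕ∞) (fderiv ℝ f) Ω := hf.fderiv_of_isOpen hΩ (by simp)
  have hdiff : DifferentiableAt ℝ (fderiv ℝ f) x :=
    (h1.contDiffAt (hΩ.mem_nhds hx)).differentiableAt (by decide)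
  rw [pder_pder_eq hdiff, pder_pder_eq hdiff]
  exact hsym.eq (bv i) (bv j)

end Tools
lemma affine_of_hess_zero {Ω : Set (Fin 2 → ℝ)} {k : (Fin 2 → ℝ) → ℝ} (hΩo : IsOpen Ω) (hΩc : Convex ℝ Ω) {x₀ : Fin 2 → ℝ} (hx₀ : x₀ ∈ Ω)
    (hk : ContDiffOn ℝ (⊤ : ℕ∞) k Ω)
    (hzero : ∀ x ∈ Ω, ∀ i j, pder (pder k j) i x = 0) :
    ∃ a b₀ b₁ : ℝ, ∀ x ∈ Ω, k x = a + b₀ * x 0 + b₁ * x 1 := by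
  set φ := fderiv ℝ k with hφ
  have hφd : ContDiffOn ℝ (⊤ : ℕ∞) φ Ω := hk.fderiv_of_isOpen hΩo (by simp)
  have hφdiff : ∀ x ∈ Ω, DifferentiableAt ℝ φ x := fun x hx =>
    (hφd.contDiffAt (hΩo.mem_nhds hx)).differentiableAt (by decide)
  have hφ0 : ∀ x ∈ Ω, fderiv ℝ φ x = 0 := by
    intro x hx
    have key : ∀ i j, fderiv ℝ φ x (bv i) (bv j) = 0 := by
      intro i j
      rw [← pder_pder_eq (hφdiff x hx)]
      exact hzero x hx i j
    ext v w
    conv_lhs => rw [vec_decomp v, vec_decomp w]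
    simp only [map_add, map_smul, ContinuousLinearMap.add_apply, ContinuousLinearMap.smul_apply,
      key]
    simp
  obtain ⟨L, hL⟩ : ∃ L, ∀ x ∈ Ω, φ x = L := by
    refine ⟨φ x₀, fun x hx => ?_⟩
    have := Convex.norm_image_sub_le_of_norm_fderiv_le (f := φ) (C := 0)
      (fun y hy => hφdiff y hy) (fun y hy => by rw [hφ0 y hy]; simp) hΩc hx₀ hx
    have h2 : ‖φ x - φ x₀‖ ≤ 0 := by simpa using this
    exact sub_eq_zero.mp (norm_le_zero_iff.mp h2)
  have hkdiff : ∀ x ∈ Ω, DifferentiableAt ℝ k x := fun x hx =>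
    (hk.contDiffAt (hΩo.mem_nhds hx)).differentiableAt (by decide)
  set k2 := fun x => k x - L x with hk2
  have hk2diff : ∀ x ∈ Ω, DifferentiableAt ℝ k2 x := fun x hx =>
    (hkdiff x hx).sub (L.differentiableAt)
  have hk2f : ∀ x ∈ Ω, fderiv ℝ k2 x = 0 := by
    intro x hx
    rw [hk2]
    rw [fderiv_fun_sub (hkdiff x hx) L.differentiableAt, L.fderiv, ← hφ, hL x hx, sub_self]
  have hconst : ∀ x ∈ Ω, k2 x = k2 x₀ := by
    intro x hx
    have := Convex.norm_image_sub_le_of_norm_fderiv_le (f := k2) (C := 0)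
      (fun y hy => hk2diff y hy) (fun y hy => by rw [hk2f y hy]; simp) hΩc hx₀ hx
    have h2 : ‖k2 x - k2 x₀‖ ≤ 0 := by simpa using this
    exact sub_eq_zero.mp (norm_le_zero_iff.mp h2)
  refine ⟨k2 x₀, L (bv 0), L (bv 1), fun x hx => ?_⟩
  have h1 : k x = k2 x₀ + L x := by
    have h3 := hconst x hx
    simp only [hk2] at h3 ⊢
    linarith
  rw [h1]
  conv_lhs => rw [vec_decomp x]
  rw [map_add, map_smul, map_smul]
  simp [smul_eq_mul]
  ring
lemma vanish_of_ode {Ω : Set (Fin 2 → ℝ)} (hΩo : IsOpen Ω) (hΩc : Convex ℝ Ω)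
    {h p q : (Fin 2 → ℝ) → ℝ}
    (hh : ∀ x ∈ Ω, DifferentiableAt ℝ h x) (hp : ContinuousOn p Ω) (hq : ContinuousOn q Ω)
    (he0 : ∀ x ∈ Ω, pder h 0 x = p x * h x) (he1 : ∀ x ∈ Ω, pder h 1 x = q x * h x)
    {x₀ : Fin 2 → ℝ} (hx₀ : x₀ ∈ Ω) (hz : h x₀ = 0) :
    ∀ x ∈ Ω, h x = 0 := by
  intro x hx
  set γ : ℝ → (Fin 2 → ℝ) := fun t => x₀ + t • (x - x₀) with hγdef
  have hγΩ : ∀ t ∈ Set.Icc (0:ℝ) 1, γ t ∈ Ω := by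
    intro t ht
    have : (1 - t) • x₀ + t • x ∈ Ω := hΩc hx₀ hx (by linarith [ht.1, ht.2]) (by linarith [ht.1, ht.2]) (by ring)
    convert this using 1
    simp only [hγdef]
    module
  have hγcont : Continuous γ := by continuity
  have hγderiv : ∀ t : ℝ, HasDerivAt γ (x - x₀) t := by
    intro t
    simpa [hγdef] using ((hasDerivAt_id t).smul_const (x - x₀)).const_add x₀
  set lam : ℝ → ℝ := fun t => (x - x₀) 0 * p (γ t) + (x - x₀) 1 * q (γ t) with hlam
  set H : ℝ → ℝ := fun t => h (γ t) with hH
  have hHderiv : ∀ t ∈ Set.Icc (0:ℝ) 1, HasDerivAt H (lam t * H t) t := by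
    intro t ht
    have hd := ((hh (γ t) (hγΩ t ht)).hasFDerivAt.comp_hasDerivAt t (hγderiv t))
    have : fderiv ℝ h (γ t) (x - x₀) = lam t * H t := by
      rw [fderiv_apply_eq (hh (γ t) (hγΩ t ht)), he0 _ (hγΩ t ht), he1 _ (hγΩ t ht)]
      simp only [hlam, hH]; ring
    rw [← this]
    exact hd
  have hlamcont : ContinuousOn lam (Set.Icc 0 1) := by
    apply ContinuousOn.add
    · exact ContinuousOn.mul continuousOn_const
        ((hp.comp hγcont.continuousOn) (fun t ht => hγΩ t ht))
    · exact ContinuousOn.mul continuousOn_const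
        ((hq.comp hγcont.continuousOn) (fun t ht => hγΩ t ht))
  obtain ⟨K, hK⟩ := isCompact_Icc.exists_bound_of_continuousOn hlamcont
  have hHcont : ContinuousOn H (Set.Icc 0 1) := by
    intro t ht
    exact ((hh (γ t) (hγΩ t ht)).continuousAt.comp (hγcont.continuousAt)).continuousWithinAt
  have key := norm_le_gronwallBound_of_norm_deriv_right_le (f := H)
      (f' := fun t => lam t * H t) (δ := 0) (K := K) (ε := 0) (a := 0) (b := 1)
      hHcont
      (fun t ht => (hHderiv t (Set.mem_Icc_of_Ico ht)).hasDerivWithinAt)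
      (by simp [hH, hγdef, hz])
      (fun t ht => by
        have h1 : ‖lam t * H t‖ = ‖lam t‖ * ‖H t‖ := norm_mul _ _
        rw [h1]
        have := hK t (Set.mem_Icc_of_Ico ht)
        nlinarith [norm_nonneg (H t), norm_nonneg (lam t)])
  have := key 1 (by norm_num)
  rw [gronwallBound_ε0] at this
  simp only [hH, hγdef] at this
  have hx1 : x₀ + (1:ℝ) • (x - x₀) = x := by module
  rw [hx1] at this
  simpa using this

lemma Smat_00 (f g : (Fin 2 → ℝ) → ℝ) (x : Fin 2 → ℝ) :
    Smat f g x 0 0 = -2 * pder g 0 x := by simp [Smat]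
lemma Smat_01 (f g : (Fin 2 → ℝ) → ℝ) (x : Fin 2 → ℝ) :
    Smat f g x 0 1 = pder f 0 x - pder g 1 x := by simp [Smat]
lemma Smat_10 (f g : (Fin 2 → ℝ) → ℝ) (x : Fin 2 → ℝ) :
    Smat f g x 1 0 = pder f 0 x - pder g 1 x := by simp [Smat]
lemma Smat_11 (f g : (Fin 2 → ℝ) → ℝ) (x : Fin 2 → ℝ) :
    Smat f g x 1 1 = 2 * pder f 1 x := by simp [Smat]

-- Second-order consequences of one linear relation.
lemma second_order_key {Ω : Set (Fin 2 → ℝ)} (hΩo : IsOpen Ω)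
    {f g : (Fin 2 → ℝ) → ℝ}
    (hf : ContDiffOn ℝ (⊤ : ℕ∞) f Ω) (hg : ContDiffOn ℝ (⊤ : ℕ∞) g Ω)
    (c : Fin 6 → ℝ)
    (hc : ∀ x ∈ Ω, c 0 + c 1 * x 0 + c 2 * x 1 + c 3 * f x + c 4 * g x
          + c 5 * (x 1 * f x - x 0 * g x) = 0) :
    ∀ x ∈ Ω, ∀ i j, (c 3 + c 5 * x 1) * pder (pder f j) i x
        + (c 4 - c 5 * x 0) * pder (pder g j) i x = - c 5 * Smat f g x i j := by
  -- first-order identities (as functions vanishing on Ω)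
  have h10 : ∀ x ∈ Ω, c 1 + c 3 * pder f 0 x + c 4 * pder g 0 x
      + c 5 * (x 1 * pder f 0 x - g x - x 0 * pder g 0 x) = 0 := by
    intro x hx
    have hfx : DifferentiableAt ℝ f x := diffAt_of_contDiffOn hΩo hf hx
    have hgx : DifferentiableAt ℝ g x := diffAt_of_contDiffOn hΩo hg hx
    have h0 : pder (fun y => c 0 + c 1 * y 0 + c 2 * y 1 + c 3 * f y + c 4 * g y
        + c 5 * (y 1 * f y - y 0 * g y)) 0 x = pder (fun _ => (0:ℝ)) 0 x :=
      pder_congr hΩo (fun y hy => hc y hy) hx 0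
    rw [pder_const] at h0
    simp (disch := fun_prop) only [pder_add, pder_mul, pder_sub, pder_const, pder_coord] at h0
    norm_num [Fin.ext_iff] at h0
    linarith [h0]
  have h11 : ∀ x ∈ Ω, c 2 + c 3 * pder f 1 x + c 4 * pder g 1 x
      + c 5 * (f x + x 1 * pder f 1 x - x 0 * pder g 1 x) = 0 := by
    intro x hx
    have hfx : DifferentiableAt ℝ f x := diffAt_of_contDiffOn hΩo hf hx
    have hgx : DifferentiableAt ℝ g x := diffAt_of_contDiffOn hΩo hg hx
    have h0 : pder (fun y => c 0 + c 1 * y 0 + c 2 * y 1 + c 3 * f y + c 4 * g y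
        + c 5 * (y 1 * f y - y 0 * g y)) 1 x = pder (fun _ => (0:ℝ)) 1 x :=
      pder_congr hΩo (fun y hy => hc y hy) hx 1
    rw [pder_const] at h0
    simp (disch := fun_prop) only [pder_add, pder_mul, pder_sub, pder_const, pder_coord] at h0
    norm_num [Fin.ext_iff] at h0
    linarith [h0]
  -- second-order identities
  intro x hx i j
  have hfx : DifferentiableAt ℝ f x := diffAt_of_contDiffOn hΩo hf hx
  have hgx : DifferentiableAt ℝ g x := diffAt_of_contDiffOn hΩo hg hx
  have hf0 : DifferentiableAt ℝ (pder f 0) x :=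
    diffAt_of_contDiffOn hΩo (contDiffOn_pder hΩo hf 0) hx
  have hf1 : DifferentiableAt ℝ (pder f 1) x :=
    diffAt_of_contDiffOn hΩo (contDiffOn_pder hΩo hf 1) hx
  have hg0 : DifferentiableAt ℝ (pder g 0) x :=
    diffAt_of_contDiffOn hΩo (contDiffOn_pder hΩo hg 0) hx
  have hg1 : DifferentiableAt ℝ (pder g 1) x :=
    diffAt_of_contDiffOn hΩo (contDiffOn_pder hΩo hg 1) hx
  have key0 : ∀ i' : Fin 2, pder (fun y => c 1 + c 3 * pder f 0 y + c 4 * pder g 0 y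
      + c 5 * (y 1 * pder f 0 y - g y - y 0 * pder g 0 y)) i' x = 0 := by
    intro i'
    rw [pder_congr hΩo (fun y hy => h10 y hy) hx i', pder_const]
  have key1 : ∀ i' : Fin 2, pder (fun y => c 2 + c 3 * pder f 1 y + c 4 * pder g 1 y
      + c 5 * (f y + y 1 * pder f 1 y - y 0 * pder g 1 y)) i' x = 0 := by
    intro i'
    rw [pder_congr hΩo (fun y hy => h11 y hy) hx i', pder_const]
  have H00 : (c 3 + c 5 * x 1) * pder (pder f 0) 0 x
      + (c 4 - c 5 * x 0) * pder (pder g 0) 0 x = - c 5 * Smat f g x 0 0 := by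
    have h := key0 0
    simp (disch := fun_prop) only [pder_add, pder_mul, pder_sub, pder_const, pder_coord] at h
    norm_num [Fin.ext_iff] at h
    rw [Smat_00]; linarith [h]
  have H10 : (c 3 + c 5 * x 1) * pder (pder f 0) 1 x
      + (c 4 - c 5 * x 0) * pder (pder g 0) 1 x = - c 5 * Smat f g x 1 0 := by
    have h := key0 1
    simp (disch := fun_prop) only [pder_add, pder_mul, pder_sub, pder_const, pder_coord] at h
    norm_num [Fin.ext_iff] at h
    rw [Smat_10]; linarith [h]
  have H01 : (c 3 + c 5 * x 1) * pder (pder f 1) 0 x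
      + (c 4 - c 5 * x 0) * pder (pder g 1) 0 x = - c 5 * Smat f g x 0 1 := by
    have h := key1 0
    simp (disch := fun_prop) only [pder_add, pder_mul, pder_sub, pder_const, pder_coord] at h
    norm_num [Fin.ext_iff] at h
    rw [Smat_01]; linarith [h]
  have H11 : (c 3 + c 5 * x 1) * pder (pder f 1) 1 x
      + (c 4 - c 5 * x 0) * pder (pder g 1) 1 x = - c 5 * Smat f g x 1 1 := by
    have h := key1 1
    simp (disch := fun_prop) only [pder_add, pder_mul, pder_sub, pder_const, pder_coord] at h
    norm_num [Fin.ext_iff] at h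
    rw [Smat_11]; linarith [h]
  fin_cases i <;> fin_cases j
  · exact H00
  · exact H01
  · exact H10
  · exact H11

lemma dir1 {Ω : Set (Fin 2 → ℝ)} (hΩo : IsOpen Ω) (hΩc : Convex ℝ Ω) (hΩne : Ω.Nonempty)
    {f g : (Fin 2 → ℝ) → ℝ}
    (hf : ContDiffOn ℝ (⊤ : ℕ∞) f Ω) (hg : ContDiffOn ℝ (⊤ : ℕ∞) g Ω)
    (hnd : ∀ x ∈ Ω, (pder f 0 x - pder g 1 x) ^ 2 + 4 * pder f 1 x * pder g 0 x ≠ 0)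
    (c c' : Fin 6 → ℝ) (hind : LinearIndependent ℝ ![c, c'])
    (hc : ∀ x ∈ Ω, c 0 + c 1 * x 0 + c 2 * x 1 + c 3 * f x + c 4 * g x
          + c 5 * (x 1 * f x - x 0 * g x) = 0)
    (hc' : ∀ x ∈ Ω, c' 0 + c' 1 * x 0 + c' 2 * x 1 + c' 3 * f x + c' 4 * g x
          + c' 5 * (x 1 * f x - x 0 * g x) = 0) :
    ∃ p q : (Fin 2 → ℝ) → ℝ, ContDiffOn ℝ (⊤ : ℕ∞) p Ω ∧ ContDiffOn ℝ (⊤ : ℕ∞) q Ω ∧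
      ∀ x ∈ Ω, hess f x = p x • Smat f g x ∧ hess g x = q x • Smat f g x := by
  have key := second_order_key hΩo hf hg c hc
  have key' := second_order_key hΩo hf hg c' hc'
  set A : (Fin 2 → ℝ) → ℝ := fun x => c 3 + c 5 * x 1 with hA
  set B : (Fin 2 → ℝ) → ℝ := fun x => c 4 - c 5 * x 0 with hB
  set A' : (Fin 2 → ℝ) → ℝ := fun x => c' 3 + c' 5 * x 1 with hA'
  set B' : (Fin 2 → ℝ) → ℝ := fun x => c' 4 - c' 5 * x 0 with hB'
  set D : (Fin 2 → ℝ) → ℝ := fun x => A x * B' x - A' x * B x with hD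
  -- a nontrivial combination annihilating (A,B) at a point kills everything
  have hcomb : ∀ x ∈ Ω, ∀ μ ν : ℝ, μ * A x + ν * A' x = 0 → μ * B x + ν * B' x = 0 →
      (μ = 0 ∧ ν = 0) := by
    intro x hx μ ν hμν1 hμν2
    -- S x is not the zero matrix
    have hS : Smat f g x 0 1 ≠ 0 ∨ Smat f g x 0 0 ≠ 0 ∨ Smat f g x 1 1 ≠ 0 := by
      by_contra hcon
      push_neg at hcon
      apply hnd x hx
      rw [Smat_01] at *
      have h1 := hcon.1
      have h2 := hcon.2.1
      have h3 := hcon.2.2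
      rw [Smat_00] at h2
      rw [Smat_11] at h3
      nlinarith [h1, h2, h3]
    -- the combined vector
    set c'' : Fin 6 → ℝ := fun k => μ * c k + ν * c' k with hc''
    have keyc'' : ∀ i j : Fin 2, 0 = - c'' 5 * Smat f g x i j := by
      intro i j
      have k1 := key x hx i j
      have k2 := key' x hx i j
      have e1 : μ * A x + ν * A' x = 0 := hμν1
      have e2 : μ * B x + ν * B' x = 0 := hμν2
      simp only [hc'']
      simp only [hA, hB, hA', hB'] at e1 e2 ⊢
      linear_combination μ * k1 + ν * k2 - (pder (pder f j) i x) * e1 - (pder (pder g j) i x) * e2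
    have hc5 : c'' 5 = 0 := by
      rcases hS with h | h | h
      · have h0 := keyc'' 0 1
        have h0' : c'' 5 * Smat f g x 0 1 = 0 := by linarith
        rcases mul_eq_zero.mp h0' with h' | h'
        · exact h'
        · exact absurd h' h
      · have h0 := keyc'' 0 0
        have h0' : c'' 5 * Smat f g x 0 0 = 0 := by linarith
        rcases mul_eq_zero.mp h0' with h' | h'
        · exact h'
        · exact absurd h' h
      · have h0 := keyc'' 1 1
        have h0' : c'' 5 * Smat f g x 1 1 = 0 := by linarith
        rcases mul_eq_zero.mp h0' with h' | h'
        · exact h'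
        · exact absurd h' h
    have hc3 : c'' 3 = 0 := by
      have : c'' 3 + c'' 5 * x 1 = 0 := by
        simp only [hc'', hA, hA'] at hμν1 ⊢; linarith [hμν1]
      rw [hc5] at this; linarith
    have hc4 : c'' 4 = 0 := by
      have : c'' 4 - c'' 5 * x 0 = 0 := by
        simp only [hc'', hB, hB'] at hμν2 ⊢; linarith [hμν2]
      rw [hc5] at this; linarith
    have hrel'' : ∀ y ∈ Ω, c'' 0 + c'' 1 * y 0 + c'' 2 * y 1 = 0 := by
      intro y hy
      have h1 := hc y hy
      have h2 := hc' y hy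
      have e3 : μ * c 3 + ν * c' 3 = 0 := hc3
      have e4 : μ * c 4 + ν * c' 4 = 0 := hc4
      have e5 : μ * c 5 + ν * c' 5 = 0 := hc5
      simp only [hc'']
      linear_combination μ * h1 + ν * h2 - f y * e3 - g y * e4 - (y 1 * f y - y 0 * g y) * e5
    have hc1 : c'' 1 = 0 := by
      have h0 : pder (fun y => c'' 0 + c'' 1 * y 0 + c'' 2 * y 1) 0 x
          = pder (fun _ => (0:ℝ)) 0 x := pder_congr hΩo (fun y hy => hrel'' y hy) hx 0
      rw [pder_const] at h0
      simp (disch := fun_prop) only [pder_add, pder_mul, pder_sub, pder_const, pder_coord] at h0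
      norm_num [Fin.ext_iff] at h0
      linarith [h0]
    have hc2 : c'' 2 = 0 := by
      have h0 : pder (fun y => c'' 0 + c'' 1 * y 0 + c'' 2 * y 1) 1 x
          = pder (fun _ => (0:ℝ)) 1 x := pder_congr hΩo (fun y hy => hrel'' y hy) hx 1
      rw [pder_const] at h0
      simp (disch := fun_prop) only [pder_add, pder_mul, pder_sub, pder_const, pder_coord] at h0
      norm_num [Fin.ext_iff] at h0
      linarith [h0]
    have hc0 : c'' 0 = 0 := by
      have := hrel'' x hx
      rw [hc1, hc2] at this; linarith
    have hzero : μ • c + ν • c' = 0 := by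
      funext k
      have : ∀ k', c'' k' = μ * c k' + ν * c' k' := fun _ => rfl
      fin_cases k
      · simpa [this] using hc0
      · simpa [this] using hc1
      · simpa [this] using hc2
      · simpa [this] using hc3
      · simpa [this] using hc4
      · simpa [this] using hc5
    exact LinearIndependent.pair_iff.mp hind μ ν hzero
  -- the determinant is nonvanishing
  have hDne : ∀ x ∈ Ω, D x ≠ 0 := by
    intro x hx hDx
    simp only [hD] at hDx
    by_cases hAB : A x = 0 ∧ B x = 0
    · have := hcomb x hx 1 0 (by rw [hAB.1]; ring) (by rw [hAB.2]; ring)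
      exact one_ne_zero this.1
    · have hs : A x ^ 2 + B x ^ 2 ≠ 0 := by
        intro hs0
        exact hAB ⟨by nlinarith [sq_nonneg (A x), sq_nonneg (B x)],
          by nlinarith [sq_nonneg (A x), sq_nonneg (B x)]⟩
      set lam : ℝ := (A' x * A x + B' x * B x) / (A x ^ 2 + B x ^ 2) with hlam
      have e1 : lam * A x + (-1) * A' x = 0 := by
        rw [hlam]; field_simp; linear_combination B x * hDx
      have e2 : lam * B x + (-1) * B' x = 0 := by
        rw [hlam]; field_simp; linear_combination (- A x) * hDx
      have := hcomb x hx lam (-1) e1 e2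
      norm_num at this
  -- define p and q
  refine ⟨fun x => (c' 5 * B x - c 5 * B' x) / D x,
          fun x => (c 5 * A' x - c' 5 * A x) / D x, ?_, ?_, ?_⟩
  · apply ContDiffOn.div
    · apply ContDiffOn.sub
      · exact (contDiff_const.mul (contDiff_const.sub (contDiff_const.mul
          ((ContinuousLinearMap.proj (R := ℝ) (φ := fun _ : Fin 2 => ℝ) 0)).contDiff))).contDiffOn
      · exact (contDiff_const.mul (contDiff_const.sub (contDiff_const.mul
          ((ContinuousLinearMap.proj (R := ℝ) (φ := fun _ : Fin 2 => ℝ) 0)).contDiff))).contDiffOn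
    · apply ContDiffOn.sub <;>
      · apply ContDiffOn.mul <;>
        · first
          | exact (contDiff_const.add (contDiff_const.mul
              ((ContinuousLinearMap.proj (R := ℝ) (φ := fun _ : Fin 2 => ℝ) 1)).contDiff)).contDiffOn
          | exact (contDiff_const.sub (contDiff_const.mul
              ((ContinuousLinearMap.proj (R := ℝ) (φ := fun _ : Fin 2 => ℝ) 0)).contDiff)).contDiffOn
    · exact hDne
  · apply ContDiffOn.div
    · apply ContDiffOn.sub <;>
      · apply ContDiffOn.mul
        · exact contDiffOn_const
        · first
          | exact (contDiff_const.add (contDiff_const.mul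
              ((ContinuousLinearMap.proj (R := ℝ) (φ := fun _ : Fin 2 => ℝ) 1)).contDiff)).contDiffOn
          | exact (contDiff_const.sub (contDiff_const.mul
              ((ContinuousLinearMap.proj (R := ℝ) (φ := fun _ : Fin 2 => ℝ) 0)).contDiff)).contDiffOn
    · apply ContDiffOn.sub <;>
      · apply ContDiffOn.mul <;>
        · first
          | exact (contDiff_const.add (contDiff_const.mul
              ((ContinuousLinearMap.proj (R := ℝ) (φ := fun _ : Fin 2 => ℝ) 1)).contDiff)).contDiffOn
          | exact (contDiff_const.sub (contDiff_const.mul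
              ((ContinuousLinearMap.proj (R := ℝ) (φ := fun _ : Fin 2 => ℝ) 0)).contDiff)).contDiffOn
    · exact hDne
  · intro x hx
    have hDx := hDne x hx
    simp only [hD] at hDx
    constructor
    · apply Matrix.ext
      intro i j
      have k1 := key x hx i j
      have k2 := key' x hx i j
      rw [Matrix.smul_apply, smul_eq_mul, hess_apply]
      rw [div_mul_eq_mul_div, eq_div_iff (by simpa [hD] using hDne x hx)]
      simp only [hD]
      linear_combination B' x * k1 - B x * k2
    · apply Matrix.ext
      intro i j
      have k1 := key x hx i j
      have k2 := key' x hx i j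
      rw [Matrix.smul_apply, smul_eq_mul, hess_apply]
      rw [div_mul_eq_mul_div, eq_div_iff (by simpa [hD] using hDne x hx)]
      simp only [hD]
      linear_combination A x * k2 - A' x * k1

lemma coord_contDiffOn (j : Fin 2) (Ω : Set (Fin 2 → ℝ)) :
    ContDiffOn ℝ (⊤ : ℕ∞) (fun y : Fin 2 → ℝ => y j) Ω :=
  ((ContinuousLinearMap.proj (R := ℝ) (φ := fun _ : Fin 2 => ℝ) j)).contDiff.contDiffOn

lemma dir2 {Ω : Set (Fin 2 → ℝ)} (hΩo : IsOpen Ω) (hΩc : Convex ℝ Ω) (hΩne : Ω.Nonempty)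
    {f g : (Fin 2 → ℝ) → ℝ}
    (hf : ContDiffOn ℝ (⊤ : ℕ∞) f Ω) (hg : ContDiffOn ℝ (⊤ : ℕ∞) g Ω)
    (hnd : ∀ x ∈ Ω, (pder f 0 x - pder g 1 x) ^ 2 + 4 * pder f 1 x * pder g 0 x ≠ 0)
    (p q : (Fin 2 → ℝ) → ℝ) (hp : ContDiffOn ℝ (⊤ : ℕ∞) p Ω) (hq : ContDiffOn ℝ (⊤ : ℕ∞) q Ω)
    (hpq : ∀ x ∈ Ω, hess f x = p x • Smat f g x ∧ hess g x = q x • Smat f g x) :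
    ∃ c c' : Fin 6 → ℝ, LinearIndependent ℝ ![c, c'] ∧
      (∀ x ∈ Ω, c 0 + c 1 * x 0 + c 2 * x 1 + c 3 * f x + c 4 * g x
          + c 5 * (x 1 * f x - x 0 * g x) = 0) ∧
      (∀ x ∈ Ω, c' 0 + c' 1 * x 0 + c' 2 * x 1 + c' 3 * f x + c' 4 * g x
          + c' 5 * (x 1 * f x - x 0 * g x) = 0) := by
  -- entrywise Hessian identities
  have Hf : ∀ x ∈ Ω, ∀ i j, pder (pder f j) i x = p x * Smat f g x i j := by
    intro x hx i j
    have := congrArg (fun M : Matrix (Fin 2) (Fin 2) ℝ => M i j) (hpq x hx).1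
    simpa [hess_apply, Matrix.smul_apply, smul_eq_mul] using this
  have Hg : ∀ x ∈ Ω, ∀ i j, pder (pder g j) i x = q x * Smat f g x i j := by
    intro x hx i j
    have := congrArg (fun M : Matrix (Fin 2) (Fin 2) ℝ => M i j) (hpq x hx).2
    simpa [hess_apply, Matrix.smul_apply, smul_eq_mul] using this
  -- explicit versions
  have Hf00 : ∀ x ∈ Ω, pder (pder f 0) 0 x = p x * (-2 * pder g 0 x) := by
    intro x hx; rw [Hf x hx 0 0, Smat_00]
  have Hf10 : ∀ x ∈ Ω, pder (pder f 0) 1 x = p x * (pder f 0 x - pder g 1 x) := by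
    intro x hx; rw [Hf x hx 1 0, Smat_10]
  have Hf01 : ∀ x ∈ Ω, pder (pder f 1) 0 x = p x * (pder f 0 x - pder g 1 x) := by
    intro x hx; rw [Hf x hx 0 1, Smat_01]
  have Hf11 : ∀ x ∈ Ω, pder (pder f 1) 1 x = p x * (2 * pder f 1 x) := by
    intro x hx; rw [Hf x hx 1 1, Smat_11]
  have Hg00 : ∀ x ∈ Ω, pder (pder g 0) 0 x = q x * (-2 * pder g 0 x) := by
    intro x hx; rw [Hg x hx 0 0, Smat_00]
  have Hg10 : ∀ x ∈ Ω, pder (pder g 0) 1 x = q x * (pder f 0 x - pder g 1 x) := by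
    intro x hx; rw [Hg x hx 1 0, Smat_10]
  have Hg01 : ∀ x ∈ Ω, pder (pder g 1) 0 x = q x * (pder f 0 x - pder g 1 x) := by
    intro x hx; rw [Hg x hx 0 1, Smat_01]
  have Hg11 : ∀ x ∈ Ω, pder (pder g 1) 1 x = q x * (2 * pder f 1 x) := by
    intro x hx; rw [Hg x hx 1 1, Smat_11]
  -- PDEs for p and q
  have pde : ∀ x ∈ Ω, pder p 0 x = -(p x * q x) ∧ pder p 1 x = p x ^ 2
      ∧ pder q 0 x = -(q x ^ 2) ∧ pder q 1 x = p x * q x := by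
    intro x hx
    have hfx : DifferentiableAt ℝ f x := diffAt_of_contDiffOn hΩo hf hx
    have hgx : DifferentiableAt ℝ g x := diffAt_of_contDiffOn hΩo hg hx
    have hpx : DifferentiableAt ℝ p x := diffAt_of_contDiffOn hΩo hp hx
    have hqx : DifferentiableAt ℝ q x := diffAt_of_contDiffOn hΩo hq hx
    have hf0 : DifferentiableAt ℝ (pder f 0) x :=
      diffAt_of_contDiffOn hΩo (contDiffOn_pder hΩo hf 0) hx
    have hf1 : DifferentiableAt ℝ (pder f 1) x :=
      diffAt_of_contDiffOn hΩo (contDiffOn_pder hΩo hf 1) hx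
    have hg0 : DifferentiableAt ℝ (pder g 0) x :=
      diffAt_of_contDiffOn hΩo (contDiffOn_pder hΩo hg 0) hx
    have hg1 : DifferentiableAt ℝ (pder g 1) x :=
      diffAt_of_contDiffOn hΩo (contDiffOn_pder hΩo hg 1) hx
    -- raw third-derivative identities
    have eq1 : pder (fun y => p y * (-2 * pder g 0 y)) 1 x
        = pder (fun y => p y * (pder f 0 y - pder g 1 y)) 0 x := by
      rw [← pder_congr hΩo (fun y hy => Hf00 y hy) hx 1,
          ← pder_congr hΩo (fun y hy => Hf10 y hy) hx 0]
      exact pder_comm hΩo (contDiffOn_pder hΩo hf 0) hx 1 0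
    have eq2 : pder (fun y => p y * (2 * pder f 1 y)) 0 x
        = pder (fun y => p y * (pder f 0 y - pder g 1 y)) 1 x := by
      rw [← pder_congr hΩo (fun y hy => Hf11 y hy) hx 0,
          ← pder_congr hΩo (fun y hy => Hf01 y hy) hx 1]
      exact pder_comm hΩo (contDiffOn_pder hΩo hf 1) hx 0 1
    have eq3 : pder (fun y => q y * (-2 * pder g 0 y)) 1 x
        = pder (fun y => q y * (pder f 0 y - pder g 1 y)) 0 x := by
      rw [← pder_congr hΩo (fun y hy => Hg00 y hy) hx 1,
          ← pder_congr hΩo (fun y hy => Hg10 y hy) hx 0]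
      exact pder_comm hΩo (contDiffOn_pder hΩo hg 0) hx 1 0
    have eq4 : pder (fun y => q y * (2 * pder f 1 y)) 0 x
        = pder (fun y => q y * (pder f 0 y - pder g 1 y)) 1 x := by
      rw [← pder_congr hΩo (fun y hy => Hg11 y hy) hx 0,
          ← pder_congr hΩo (fun y hy => Hg01 y hy) hx 1]
      exact pder_comm hΩo (contDiffOn_pder hΩo hg 1) hx 0 1
    simp (disch := fun_prop) only [pder_add, pder_mul, pder_sub, pder_const,
      pder_const_mul, pder_coord] at eq1 eq2 eq3 eq4
    simp only [Hf00 x hx, Hg00 x hx, Hg10 x hx, Hg01 x hx, Hg11 x hx, Hf01 x hx, Hf10 x hx,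
      Hf11 x hx] at eq1 eq2 eq3 eq4
    set m := pder f 0 x - pder g 1 x
    set b := pder f 1 x
    set cc := pder g 0 x
    have hnd' : m ^ 2 + 4 * b * cc ≠ 0 := hnd x hx
    have hP : (m ^ 2 + 4 * b * cc) * (pder p 0 x + p x * q x) = 0 := by
      linear_combination (-m) * eq1 + (2 * cc) * eq2
    have hQ : (m ^ 2 + 4 * b * cc) * (pder p 1 x - p x ^ 2) = 0 := by
      linear_combination (-2 * b) * eq1 + (-m) * eq2
    have hR : (m ^ 2 + 4 * b * cc) * (pder q 0 x + q x ^ 2) = 0 := by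
      linear_combination (-m) * eq3 + (2 * cc) * eq4
    have hT : (m ^ 2 + 4 * b * cc) * (pder q 1 x - p x * q x) = 0 := by
      linear_combination (-2 * b) * eq3 + (-m) * eq4
    refine ⟨?_, ?_, ?_, ?_⟩
    · rcases mul_eq_zero.mp hP with h | h
      · exact absurd h hnd'
      · linarith
    · rcases mul_eq_zero.mp hQ with h | h
      · exact absurd h hnd'
      · linarith
    · rcases mul_eq_zero.mp hR with h | h
      · exact absurd h hnd'
      · linarith
    · rcases mul_eq_zero.mp hT with h | h
      · exact absurd h hnd'
      · linarith
  -- the auxiliary function r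
  set r : (Fin 2 → ℝ) → ℝ := fun y => y 1 * p y - y 0 * q y + 1 with hrdef
  have hrC : ContDiffOn ℝ (⊤ : ℕ∞) r Ω :=
    (((coord_contDiffOn 1 Ω).mul hp).sub ((coord_contDiffOn 0 Ω).mul hq)).add contDiffOn_const
  have hrpde : ∀ x ∈ Ω, pder r 0 x = -(q x * r x) ∧ pder r 1 x = p x * r x := by
    intro x hx
    have hpx : DifferentiableAt ℝ p x := diffAt_of_contDiffOn hΩo hp hx
    have hqx : DifferentiableAt ℝ q x := diffAt_of_contDiffOn hΩo hq hx
    obtain ⟨e0, e1, e2, e3⟩ := pde x hx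
    constructor
    · have : pder r 0 x = pder (fun y => y 1 * p y - y 0 * q y + 1) 0 x := rfl
      rw [this]
      simp (disch := fun_prop) only [pder_add, pder_mul, pder_sub, pder_const, pder_coord]
      norm_num [Fin.ext_iff]
      rw [e0, e2]
      simp only [hrdef]
      ring
    · have : pder r 1 x = pder (fun y => y 1 * p y - y 0 * q y + 1) 1 x := rfl
      rw [this]
      simp (disch := fun_prop) only [pder_add, pder_mul, pder_sub, pder_const, pder_coord]
      norm_num [Fin.ext_iff]
      rw [e1, e3]
      simp only [hrdef]
      ring
  -- fix a basepoint
  obtain ⟨x₀, hx₀⟩ := hΩne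
  -- construction of one relation from an annihilating vector
  have constr : ∀ n3 n4 n5 : ℝ, n3 * p x₀ + n4 * q x₀ + n5 * r x₀ = 0 →
      ∃ c : Fin 6 → ℝ, c 3 = n3 ∧ c 4 = n4 ∧ c 5 = n5 ∧
        ∀ x ∈ Ω, c 0 + c 1 * x 0 + c 2 * x 1 + c 3 * f x + c 4 * g x
          + c 5 * (x 1 * f x - x 0 * g x) = 0 := by
    intro n3 n4 n5 horth
    set h : (Fin 2 → ℝ) → ℝ := fun y => n3 * p y + n4 * q y + n5 * r y with hhdef
    have hhdiff : ∀ x ∈ Ω, DifferentiableAt ℝ h x := by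
      intro x hx
      have hpx : DifferentiableAt ℝ p x := diffAt_of_contDiffOn hΩo hp hx
      have hqx : DifferentiableAt ℝ q x := diffAt_of_contDiffOn hΩo hq hx
      simp only [hhdef, hrdef]
      fun_prop
    have hvanish : ∀ x ∈ Ω, h x = 0 := by
      apply vanish_of_ode hΩo hΩc hhdiff
        ((hq.continuousOn).neg) (hp.continuousOn) _ _ hx₀
      · simp only [hhdef]; linear_combination horth
      · intro x hx
        have hpx : DifferentiableAt ℝ p x := diffAt_of_contDiffOn hΩo hp hx
        have hqx : DifferentiableAt ℝ q x := diffAt_of_contDiffOn hΩo hq hx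
        obtain ⟨e0, e1, e2, e3⟩ := pde x hx
        obtain ⟨er0, er1⟩ := hrpde x hx
        have hre : pder h 0 x
            = pder (fun y => n3 * p y + n4 * q y + n5 * (y 1 * p y - y 0 * q y + 1)) 0 x := rfl
        rw [hre]
        simp (disch := fun_prop) only [pder_add, pder_mul, pder_sub, pder_const,
          pder_const_mul, pder_coord]
        norm_num [Fin.ext_iff]
        rw [e0, e2]
        simp only [hhdef, hrdef]
        ring
      · intro x hx
        have hpx : DifferentiableAt ℝ p x := diffAt_of_contDiffOn hΩo hp hx
        have hqx : DifferentiableAt ℝ q x := diffAt_of_contDiffOn hΩo hq hx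
        obtain ⟨e0, e1, e2, e3⟩ := pde x hx
        have hre : pder h 1 x
            = pder (fun y => n3 * p y + n4 * q y + n5 * (y 1 * p y - y 0 * q y + 1)) 1 x := rfl
        rw [hre]
        simp (disch := fun_prop) only [pder_add, pder_mul, pder_sub, pder_const,
          pder_const_mul, pder_coord]
        norm_num [Fin.ext_iff]
        rw [e1, e3]
        simp only [hhdef, hrdef]
        ring
    -- the combination k of f, g has vanishing Hessian
    set k : (Fin 2 → ℝ) → ℝ := fun y => n3 * f y + n4 * g y + n5 * (y 1 * f y - y 0 * g y)
      with hkdef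
    have hkC : ContDiffOn ℝ (⊤ : ℕ∞) k Ω := by
      apply ContDiffOn.add
      apply ContDiffOn.add
      · exact contDiffOn_const.mul hf
      · exact contDiffOn_const.mul hg
      · exact contDiffOn_const.mul
          (((coord_contDiffOn 1 Ω).mul hf).sub ((coord_contDiffOn 0 Ω).mul hg))
    -- first derivatives of k on Ω
    have pk0 : ∀ y ∈ Ω, pder k 0 y = n3 * pder f 0 y + n4 * pder g 0 y
        + n5 * (y 1 * pder f 0 y - (g y + y 0 * pder g 0 y)) := by
      intro y hy
      have hfy : DifferentiableAt ℝ f y := diffAt_of_contDiffOn hΩo hf hy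
      have hgy : DifferentiableAt ℝ g y := diffAt_of_contDiffOn hΩo hg hy
      have hre : pder k 0 y
          = pder (fun z => n3 * f z + n4 * g z + n5 * (z 1 * f z - z 0 * g z)) 0 y := rfl
      rw [hre]
      simp (disch := fun_prop) only [pder_add, pder_mul, pder_sub, pder_const,
        pder_const_mul, pder_coord]
      norm_num [Fin.ext_iff]
      try ring
    have pk1 : ∀ y ∈ Ω, pder k 1 y = n3 * pder f 1 y + n4 * pder g 1 y
        + n5 * (f y + y 1 * pder f 1 y - y 0 * pder g 1 y) := by
      intro y hy
      have hfy : DifferentiableAt ℝ f y := diffAt_of_contDiffOn hΩo hf hy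
      have hgy : DifferentiableAt ℝ g y := diffAt_of_contDiffOn hΩo hg hy
      have hre : pder k 1 y
          = pder (fun z => n3 * f z + n4 * g z + n5 * (z 1 * f z - z 0 * g z)) 1 y := rfl
      rw [hre]
      simp (disch := fun_prop) only [pder_add, pder_mul, pder_sub, pder_const,
        pder_const_mul, pder_coord]
      norm_num [Fin.ext_iff]
      try ring
    have hesszero : ∀ x ∈ Ω, ∀ i j : Fin 2, pder (pder k j) i x = 0 := by
      intro x hx i j
      have hfx : DifferentiableAt ℝ f x := diffAt_of_contDiffOn hΩo hf hx
      have hgx : DifferentiableAt ℝ g x := diffAt_of_contDiffOn hΩo hg hx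
      have hf0 : DifferentiableAt ℝ (pder f 0) x :=
        diffAt_of_contDiffOn hΩo (contDiffOn_pder hΩo hf 0) hx
      have hf1 : DifferentiableAt ℝ (pder f 1) x :=
        diffAt_of_contDiffOn hΩo (contDiffOn_pder hΩo hf 1) hx
      have hg0 : DifferentiableAt ℝ (pder g 0) x :=
        diffAt_of_contDiffOn hΩo (contDiffOn_pder hΩo hg 0) hx
      have hg1 : DifferentiableAt ℝ (pder g 1) x :=
        diffAt_of_contDiffOn hΩo (contDiffOn_pder hΩo hg 1) hx
      have hhx : n3 * p x + n4 * q x + n5 * (x 1 * p x - x 0 * q x + 1) = 0 := hvanish x hx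
      have H00 : pder (pder k 0) 0 x = 0 := by
        rw [pder_congr hΩo pk0 hx 0]
        simp (disch := fun_prop) only [pder_add, pder_mul, pder_sub, pder_const,
          pder_const_mul, pder_coord]
        norm_num [Fin.ext_iff]
        rw [Hf00 x hx, Hg00 x hx]
        linear_combination (-2 * pder g 0 x) * hhx
      have H10 : pder (pder k 0) 1 x = 0 := by
        rw [pder_congr hΩo pk0 hx 1]
        simp (disch := fun_prop) only [pder_add, pder_mul, pder_sub, pder_const,
          pder_const_mul, pder_coord]
        norm_num [Fin.ext_iff]
        rw [Hf10 x hx, Hg10 x hx]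
        linear_combination (pder f 0 x - pder g 1 x) * hhx
      have H01 : pder (pder k 1) 0 x = 0 := by
        rw [pder_congr hΩo pk1 hx 0]
        simp (disch := fun_prop) only [pder_add, pder_mul, pder_sub, pder_const,
          pder_const_mul, pder_coord]
        norm_num [Fin.ext_iff]
        rw [Hf01 x hx, Hg01 x hx]
        linear_combination (pder f 0 x - pder g 1 x) * hhx
      have H11 : pder (pder k 1) 1 x = 0 := by
        rw [pder_congr hΩo pk1 hx 1]
        simp (disch := fun_prop) only [pder_add, pder_mul, pder_sub, pder_const,
          pder_const_mul, pder_coord]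
        norm_num [Fin.ext_iff]
        rw [Hf11 x hx, Hg11 x hx]
        linear_combination (2 * pder f 1 x) * hhx
      fin_cases i <;> fin_cases j
      · exact H00
      · exact H01
      · exact H10
      · exact H11
    obtain ⟨a, b0, b1, haff⟩ := affine_of_hess_zero hΩo hΩc hx₀ hkC hesszero
    refine ⟨![-a, -b0, -b1, n3, n4, n5], rfl, rfl, rfl, ?_⟩
    intro x hx
    have hk : n3 * f x + n4 * g x + n5 * (x 1 * f x - x 0 * g x)
        = a + b0 * x 0 + b1 * x 1 := haff x hx
    show -a + -b0 * x 0 + -b1 * x 1 + n3 * f x + n4 * g x + n5 * (x 1 * f x - x 0 * g x) = 0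
    linear_combination hk
  -- w₀ = (p x₀, q x₀, r x₀) is nonzero
  have hw0 : p x₀ ≠ 0 ∨ q x₀ ≠ 0 ∨ r x₀ ≠ 0 := by
    by_contra hcon
    push_neg at hcon
    obtain ⟨h1, h2, h3⟩ := hcon
    have : r x₀ = x₀ 1 * p x₀ - x₀ 0 * q x₀ + 1 := rfl
    rw [h1, h2, h3] at this
    norm_num at this
  -- choose the two annihilating vectors, by cases on which coordinate of w₀ is nonzero
  have coordval : ∀ (c : Fin 6 → ℝ) (s t : ℝ) (k : Fin 6) (c' : Fin 6 → ℝ),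
      s • c + t • c' = 0 → s * c k + t * c' k = 0 := by
    intro c s t k c' hst
    have := congrFun hst k
    simpa [Pi.add_apply, Pi.smul_apply, smul_eq_mul] using this
  by_cases hγ : r x₀ ≠ 0
  · obtain ⟨c, hc3, hc4, hc5, hcrel⟩ := constr (r x₀) 0 (-(p x₀)) (by ring)
    obtain ⟨c', hc3', hc4', hc5', hcrel'⟩ := constr 0 (r x₀) (-(q x₀)) (by ring)
    refine ⟨c, c', ?_, hcrel, hcrel'⟩
    rw [LinearIndependent.pair_iff]
    intro s t hst
    have i3 := coordval c s t 3 c' hst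
    have i4 := coordval c s t 4 c' hst
    rw [hc3, hc3'] at i3
    rw [hc4, hc4'] at i4
    constructor
    · rcases mul_eq_zero.mp (by linarith [i3] : s * r x₀ = 0) with h | h
      · exact h
      · exact absurd h hγ
    · rcases mul_eq_zero.mp (by linarith [i4] : t * r x₀ = 0) with h | h
      · exact h
      · exact absurd h hγ
  · push_neg at hγ
    by_cases hβ : q x₀ ≠ 0
    · obtain ⟨c, hc3, hc4, hc5, hcrel⟩ := constr (q x₀) (-(p x₀)) 0 (by ring)
      obtain ⟨c', hc3', hc4', hc5', hcrel'⟩ := constr 0 (r x₀) (-(q x₀)) (by ring)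
      refine ⟨c, c', ?_, hcrel, hcrel'⟩
      rw [LinearIndependent.pair_iff]
      intro s t hst
      have i3 := coordval c s t 3 c' hst
      have i5 := coordval c s t 5 c' hst
      rw [hc3, hc3'] at i3
      rw [hc5, hc5'] at i5
      have ht : t = 0 := by
        rcases mul_eq_zero.mp (by linarith [i5] : t * q x₀ = 0) with h | h
        · exact h
        · exact absurd h hβ
      refine ⟨?_, ht⟩
      rw [ht] at i3
      rcases mul_eq_zero.mp (by linarith [i3] : s * q x₀ = 0) with h | h
      · exact h
      · exact absurd h hβ
    · push_neg at hβ
      have hα : p x₀ ≠ 0 := by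
        rcases hw0 with h | h | h
        · exact h
        · exact absurd hβ h
        · exact absurd hγ h
      obtain ⟨c, hc3, hc4, hc5, hcrel⟩ := constr (q x₀) (-(p x₀)) 0 (by ring)
      obtain ⟨c', hc3', hc4', hc5', hcrel'⟩ := constr (r x₀) 0 (-(p x₀)) (by ring)
      refine ⟨c, c', ?_, hcrel, hcrel'⟩
      rw [LinearIndependent.pair_iff]
      intro s t hst
      have i4 := coordval c s t 4 c' hst
      have i5 := coordval c s t 5 c' hst
      rw [hc4, hc4'] at i4
      rw [hc5, hc5'] at i5
      constructor
      · rcases mul_eq_zero.mp (by linarith [i4] : s * p x₀ = 0) with h | h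
        · exact h
        · exact absurd h hα
      · rcases mul_eq_zero.mp (by linarith [i5] : t * p x₀ = 0) with h | h
        · exact h
        · exact absurd h hα

theorem stmt15 (Ω : Set (Fin 2 → ℝ)) (hΩo : IsOpen Ω) (hΩc : Convex ℝ Ω) (hΩne : Ω.Nonempty)
    (f g : (Fin 2 → ℝ) → ℝ)
    (hf : ContDiffOn ℝ (⊤ : ℕ∞) f Ω) (hg : ContDiffOn ℝ (⊤ : ℕ∞) g Ω)
    (hnd : ∀ x ∈ Ω, (pder f 0 x - pder g 1 x) ^ 2 + 4 * pder f 1 x * pder g 0 x ≠ 0) :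
    (∃ c c' : Fin 6 → ℝ, LinearIndependent ℝ ![c, c'] ∧
      (∀ x ∈ Ω, c 0 + c 1 * x 0 + c 2 * x 1 + c 3 * f x + c 4 * g x
          + c 5 * (x 1 * f x - x 0 * g x) = 0) ∧
      (∀ x ∈ Ω, c' 0 + c' 1 * x 0 + c' 2 * x 1 + c' 3 * f x + c' 4 * g x
          + c' 5 * (x 1 * f x - x 0 * g x) = 0)) ↔
    (∃ p q : (Fin 2 → ℝ) → ℝ, ContDiffOn ℝ (⊤ : ℕ∞) p Ω ∧ ContDiffOn ℝ (⊤ : ℕ∞) q Ω ∧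
      ∀ x ∈ Ω, hess f x = p x • Smat f g x ∧ hess g x = q x • Smat f g x) := by
  constructor
  · rintro ⟨c, c', hind, hc, hc'⟩
    exact dir1 hΩo hΩc hΩne hf hg hnd c c' hind hc hc'
  · rintro ⟨p, q, hp, hq, hpq⟩
    exact dir2 hΩo hΩc hΩne hf hg hnd p q hp hq hpq
end
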